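/- arXiv:1503.08933 — 3 statements merged into one kernel-verified Lean document; each statement's English description precedes it below -/
import Mathlib

section
/- Let d ≥ 1 and let (γ_u)_{u⊆[d]} be strictly positive weights. Then for every C^∞ function f : ℝ^d → ℂ one has ‖f‖_{A,d,1} ≤ C_{d,1} · ‖f‖_{⊤,d,1}, where C_{d,1} = max_{u⊆[d]} ∑_{v⊆u} γ_u/γ_v. -/
open MeasureTheory

/-- Partial derivative in direction `j`. -/
noncomputable def pderiv {d : ℕ} (j : Fin d) (f : (Fin d → ℝ) → ℂ) : (Fin d → ℝ) → ℂ :=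
  fun x => fderiv ℝ f x (Pi.single j 1)

/-- First-order mixed partial derivative `f^{(u)} = (∏_{j∈u} ∂/∂x_j) f`. -/
noncomputable def mderiv {d : ℕ} (u : Finset (Fin d)) (f : (Fin d → ℝ) → ℂ) : (Fin d → ℝ) → ℂ :=
  u.toList.foldr pderiv f

/-- The unit cube `[0,1]^d`. -/
def cube (d : ℕ) : Set (Fin d → ℝ) := Set.univ.pi fun _ => Set.Icc 0 1

/-- The point `(x_u; t_{u^c})`: `j`-th coordinate is `x j` for `j ∈ u` and `t j` otherwise. -/
def combine {d : ℕ} (u : Finset (Fin d)) (x t : Fin d → ℝ) : Fin d → ℝ :=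
  fun j => if j ∈ u then x j else t j

/-- The anchored norm with `p = 1`:
`‖f‖_{⊤,d,1} = ∑_{u⊆[d]} γ_u⁻¹ ∫_{[0,1]^u} |f^{(u)}(x_u;0)| dx_u`. -/
noncomputable def anchNorm1 {d : ℕ} (γ : Finset (Fin d) → ℝ) (f : (Fin d → ℝ) → ℂ) : ℝ :=
  ∑ u : Finset (Fin d), (γ u)⁻¹ * ∫ x in cube d, ‖mderiv u f (combine u x 0)‖

/-- The ANOVA norm with `p = 1`. -/
noncomputable def anovaNorm1 {d : ℕ} (γ : Finset (Fin d) → ℝ) (f : (Fin d → ℝ) → ℂ) : ℝ :=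
  ∑ u : Finset (Fin d), (γ u)⁻¹ *
    ∫ x in cube d, ‖∫ t in cube d, mderiv u f (combine u x t)‖

/-- `C_{d,1} = max_{u⊆[d]} ∑_{v⊆u} γ_u/γ_v`. -/
noncomputable def Cone {d : ℕ} (γ : Finset (Fin d) → ℝ) : ℝ :=
  ⨆ u : Finset (Fin d), ∑ v ∈ u.powerset, γ u / γ v

section Aux

open Set Function

variable {d : ℕ}

theorem cube_eq : cube d = Set.Icc 0 1 := Set.pi_univ_Icc _ _

theorem measurableSet_cube : MeasurableSet (cube d) := by
  rw [cube_eq]; exact measurableSet_Icc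

theorem isCompact_cube : IsCompact (cube d) := by
  rw [cube_eq]; exact isCompact_Icc

theorem volume_cube : volume (cube d) = 1 := by
  rw [cube_eq, Real.volume_Icc_pi]; simp

theorem contDiff_pderiv {f} (j : Fin d) (hf : ContDiff ℝ (⊤ : ℕ∞) f) : ContDiff ℝ (⊤ : ℕ∞) (pderiv j f) :=
  (hf.fderiv_right (by simp)).clm_apply contDiff_const

theorem contDiff_foldr {f} (l : List (Fin d)) (hf : ContDiff ℝ (⊤ : ℕ∞) f) :
    ContDiff ℝ (⊤ : ℕ∞) (l.foldr pderiv f) := by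
  induction l with
  | nil => exact hf
  | cons a l ih => exact contDiff_pderiv a ih

theorem contDiff_mderiv {f} (u : Finset (Fin d)) (hf : ContDiff ℝ (⊤ : ℕ∞) f) :
    ContDiff ℝ (⊤ : ℕ∞) (mderiv u f) := contDiff_foldr _ hf

/-- The continuous linear map `y ↦ update y j 0`. -/
noncomputable def updL (j : Fin d) : (Fin d → ℝ) →L[ℝ] (Fin d → ℝ) :=
  ContinuousLinearMap.pi (fun k => if k = j then 0 else ContinuousLinearMap.proj k)

theorem update_eq_updL (j : Fin d) (s : ℝ) :
    (fun y : Fin d → ℝ => Function.update y j s) = fun y => updL j y + Pi.single j s := by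
  funext y k
  by_cases h : k = j <;> simp [updL, Function.update_apply, Pi.single_apply, h]

theorem hasFDerivAt_update' (j : Fin d) (s : ℝ) (x : Fin d → ℝ) :
    HasFDerivAt (fun y => Function.update y j s) (updL j) x := by
  rw [update_eq_updL]
  exact (updL j).hasFDerivAt.add_const _

theorem contDiff_update_right (j : Fin d) (s : ℝ) :
    ContDiff ℝ (⊤ : ℕ∞) (fun y : Fin d → ℝ => Function.update y j s) := by
  rw [update_eq_updL]
  exact (updL j).contDiff.add contDiff_const

theorem updL_single {j k : Fin d} (h : k ≠ j) : updL j (Pi.single k 1) = Pi.single k 1 := by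
  funext m
  by_cases hm : m = j
  · subst hm; simp [updL, Pi.single_apply, h.symm]
  · simp [updL, hm]

theorem pderiv_comp_update {g : (Fin d → ℝ) → ℂ} (hg : Differentiable ℝ g) {j k : Fin d}
    (hkj : k ≠ j) (s : ℝ) :
    pderiv k (fun y => g (Function.update y j s)) =
      fun x => pderiv k g (Function.update x j s) := by
  funext x
  have h1 : HasFDerivAt (fun y => g (Function.update y j s))
      ((fderiv ℝ g (Function.update x j s)).comp (updL j)) x :=
    (hg _).hasFDerivAt.comp x (hasFDerivAt_update' j s x)
  simp only [pderiv, h1.fderiv, ContinuousLinearMap.comp_apply, updL_single hkj]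

theorem pderiv_comm {g : (Fin d → ℝ) → ℂ} (hg : ContDiff ℝ (⊤ : ℕ∞) g) (a b : Fin d) :
    pderiv a (pderiv b g) = pderiv b (pderiv a g) := by
  funext x
  have hsym : IsSymmSndFDerivAt ℝ g x := hg.contDiffAt.isSymmSndFDerivAt (by norm_num; exact WithTop.coe_le_coe.2 (le_top : (2:ℕ∞) ≤ ⊤))
  have hdiff : DifferentiableAt ℝ (fderiv ℝ g) x :=
    ((hg.fderiv_right (m := (⊤ : ℕ∞)) (by simp)).differentiable (by simp)).differentiableAt
  have key : ∀ c : Fin d, pderiv c g = fun y => (fderiv ℝ g y) (Pi.single c 1) := fun _ => rfl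
  have h1 : ∀ c : Fin d, fderiv ℝ (pderiv c g) x =
      (fderiv ℝ (fderiv ℝ g) x).flip (Pi.single c 1) := by
    intro c
    have := fderiv_clm_apply (𝕜 := ℝ) (c := fderiv ℝ g)
      (u := fun _ : Fin d → ℝ => (Pi.single c 1 : Fin d → ℝ)) (x := x)
      hdiff (differentiableAt_const _)
    rw [key c, this]
    simp
  show fderiv ℝ (pderiv b g) x (Pi.single a 1) = fderiv ℝ (pderiv a g) x (Pi.single b 1)
  rw [h1 a, h1 b]
  simpa using hsym (Pi.single a 1) (Pi.single b 1)

theorem foldr_perm {g : (Fin d → ℝ) → ℂ} (hg : ContDiff ℝ (⊤ : ℕ∞) g) {l₁ l₂ : List (Fin d)}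
    (h : l₁.Perm l₂) : l₁.foldr pderiv g = l₂.foldr pderiv g := by
  induction h with
  | nil => rfl
  | cons a _ ih => simp only [List.foldr_cons, ih]
  | swap a b l => simpa using (pderiv_comm (contDiff_foldr l hg) a b).symm
  | trans _ _ ih₁ ih₂ => rw [ih₁, ih₂]

theorem mderiv_insert {g : (Fin d → ℝ) → ℂ} (hg : ContDiff ℝ (⊤ : ℕ∞) g) {j : Fin d}
    {v : Finset (Fin d)} (hj : j ∉ v) :
    mderiv (insert j v) g = mderiv v (pderiv j g) := by
  unfold mderiv
  have h1 := foldr_perm hg (Finset.toList_insert hj)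
  have h2 : v.toList.foldr pderiv (pderiv j g) = (v.toList ++ [j]).foldr pderiv g := by
    rw [List.foldr_append]; rfl
  have h3 := foldr_perm hg (List.perm_append_singleton j v.toList)
  rw [h1, h2, ← h3]

theorem mderiv_union {f : (Fin d → ℝ) → ℂ} (hf : ContDiff ℝ (⊤ : ℕ∞) f) {u w : Finset (Fin d)}
    (h : Disjoint u w) : mderiv w (mderiv u f) = mderiv (u ∪ w) f := by
  unfold mderiv
  rw [← List.foldr_append]
  apply foldr_perm hf
  apply (List.perm_ext_iff_of_nodup ?_ ?_).2
  · intro a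
    simp [Finset.mem_union, or_comm]
  · exact List.Nodup.append w.nodup_toList u.nodup_toList
      (fun a haw hau => (Finset.disjoint_left.1 h (by simpa using hau) (by simpa using haw)))
  · exact (u ∪ w).nodup_toList

theorem foldr_comp_update {g : (Fin d → ℝ) → ℂ} (hg : ContDiff ℝ (⊤ : ℕ∞) g) {j : Fin d} (s : ℝ) :
    ∀ l : List (Fin d), j ∉ l →
      l.foldr pderiv (fun y => g (Function.update y j s)) =
        fun x => l.foldr pderiv g (Function.update x j s) := by
  intro l
  induction l with
  | nil => intro _; rfl
  | cons a l ih =>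
    intro hj
    have haj : a ≠ j := fun h => hj (by simp [h])
    have hjl : j ∉ l := fun h => hj (by simp [h])
    simp only [List.foldr_cons, ih hjl]
    exact pderiv_comp_update ((contDiff_foldr l hg).differentiable (by simp)) haj s

theorem mderiv_comp_update {g : (Fin d → ℝ) → ℂ} (hg : ContDiff ℝ (⊤ : ℕ∞) g) {j : Fin d}
    {w : Finset (Fin d)} (hj : j ∉ w) (s : ℝ) :
    mderiv w (fun y => g (Function.update y j s)) =
      fun x => mderiv w g (Function.update x j s) :=
  foldr_comp_update hg s w.toList (by simpa using hj)

/- combine lemmas -/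
theorem combine_univ (x t : Fin d → ℝ) : combine Finset.univ x t = x := by
  funext k; simp [combine]

theorem update_combine_insert (u : Finset (Fin d)) (j : Fin d) (c : ℝ) (x t : Fin d → ℝ) :
    Function.update (combine u x t) j c = Function.update (combine (insert j u) x t) j c := by
  funext k
  rcases eq_or_ne k j with rfl | h
  · simp
  · simp [Function.update_apply, h, combine, Finset.mem_insert, h]

theorem update_combine_zero {v : Finset (Fin d)} {j : Fin d} (hj : j ∉ v) (x : Fin d → ℝ) :
    Function.update (combine (insert j v) x 0) j 0 = combine v x 0 := by
  funext k
  rcases eq_or_ne k j with rfl | h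
  · simp [combine, hj]
  · simp [Function.update_apply, h, combine, Finset.mem_insert, h]

theorem update_combine_mem {v : Finset (Fin d)} {j : Fin d} (hj : j ∈ v) (s : ℝ)
    (x t : Fin d → ℝ) :
    Function.update (combine v x t) j s = combine v (Function.update x j s) t := by
  funext k
  rcases eq_or_ne k j with rfl | h
  · simp [combine, hj]
  · simp [Function.update_apply, h, combine]

theorem continuous_combine (u : Finset (Fin d)) :
    Continuous fun p : (Fin d → ℝ) × (Fin d → ℝ) => combine u p.1 p.2 := by
  apply continuous_pi
  intro k
  by_cases h : k ∈ u <;> simp only [combine, h, if_true, if_false] <;> fun_prop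

/- FTC pointwise bound -/
theorem ftc_pointwise {g : (Fin d → ℝ) → ℂ} (hg : ContDiff ℝ (⊤ : ℕ∞) g) (j : Fin d)
    {z : Fin d → ℝ} (hz : z j ∈ Set.Icc (0:ℝ) 1) :
    (‖g z‖₊ : ENNReal) ≤ (‖g (Function.update z j 0)‖₊ : ENNReal) +
      ∫⁻ s in Set.Icc (0:ℝ) 1, (‖pderiv j g (Function.update z j s)‖₊ : ENNReal) := by
  have hcont : Continuous fun s : ℝ => pderiv j g (Function.update z j s) :=
    (contDiff_pderiv j hg).continuous.comp ((continuous_const.update j continuous_id))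
  have hderiv : ∀ s ∈ Set.uIcc (0:ℝ) (z j),
      HasDerivAt (fun s => g (Function.update z j s)) (pderiv j g (Function.update z j s)) s := by
    intro s _
    have h1 : HasDerivAt (Function.update z j) (Pi.single j (1:ℝ)) s := hasDerivAt_update z j s
    have h2 : HasFDerivAt g (fderiv ℝ g (Function.update z j s)) (Function.update z j s) :=
      ((hg.differentiable (by simp)) _).hasFDerivAt
    exact h2.comp_hasDerivAt s h1
  have hint : IntervalIntegrable (fun s => pderiv j g (Function.update z j s)) volume 0 (z j) :=
    hcont.intervalIntegrable _ _
  have key := intervalIntegral.integral_eq_sub_of_hasDerivAt hderiv hint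
  rw [Function.update_eq_self] at key
  have hgz : g z = g (Function.update z j 0)
      + ∫ s in (0:ℝ)..(z j), pderiv j g (Function.update z j s) := by
    rw [key]; ring
  calc (‖g z‖₊ : ENNReal)
      ≤ (‖g (Function.update z j 0)‖₊ : ENNReal)
        + ‖∫ s in (0:ℝ)..(z j), pderiv j g (Function.update z j s)‖₊ := by
        rw [hgz]; exact_mod_cast nnnorm_add_le _ _
    _ ≤ _ := by
        gcongr
        rw [intervalIntegral.integral_of_le hz.1]
        refine le_trans (enorm_integral_le_lintegral_enorm _) ?_
        exact lintegral_mono_set (Set.Ioc_subset_Icc_self.trans (Set.Icc_subset_Icc_right hz.2))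

theorem restrict_cube :
    volume.restrict (cube d) = Measure.pi (fun _ : Fin d => volume.restrict (Set.Icc (0:ℝ) 1)) := by
  symm
  apply Measure.pi_eq
  intro s hs
  rw [Measure.restrict_apply (MeasurableSet.univ_pi hs)]
  have : cube d = Set.pi Set.univ fun _ => Set.Icc (0:ℝ) 1 := rfl
  rw [this, ← Set.pi_inter_distrib, volume_pi, Measure.pi_pi]
  congr 1
  funext i
  rw [Measure.restrict_apply (hs i)]

theorem star_lemma {h : (Fin d → ℝ) → ENNReal} (hm : Measurable h) (j : Fin d) :
    ∫⁻ s in Set.Icc (0:ℝ) 1, ∫⁻ x in cube d, h (Function.update x j s) =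
      ∫⁻ x in cube d, h x := by
  classical
  set μ : Fin d → Measure ℝ := fun _ => volume.restrict (Set.Icc (0:ℝ) 1) with hμ
  have hone : μ j Set.univ = 1 := by
    simp [hμ, Real.volume_Icc]
  rw [restrict_cube]
  set e : Finset (Fin d) := Finset.univ.erase j with he
  have hmem : j ∉ e := by rw [he]; exact Finset.notMem_erase _ _
  have huniv : (Finset.univ : Finset (Fin d)) = insert j e := by
    rw [he, Finset.insert_erase (Finset.mem_univ j)]
  calc ∫⁻ s in Set.Icc (0:ℝ) 1, ∫⁻ x, h (Function.update x j s) ∂(Measure.pi μ)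
      = ∫⁻ s in Set.Icc (0:ℝ) 1,
          (∫⋯∫⁻_Finset.univ, (h ∘ (Function.update · j s)) ∂μ) 0 := by
        congr 1; funext s
        exact lintegral_eq_lmarginal_univ 0
    _ = ∫⁻ s in Set.Icc (0:ℝ) 1,
          (∫⋯∫⁻_e, h ∂μ) (Function.update 0 j s) := by
        congr 1; funext s
        rw [huniv, lmarginal_insert _ (hm.comp measurable_update_left) hmem]
        have heach : ∀ y : ℝ,
            (∫⋯∫⁻_e, (h ∘ (Function.update · j s)) ∂μ)
              (Function.update 0 j y)
            = (∫⋯∫⁻_e, h ∂μ) (Function.update 0 j s) := by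
          intro y
          rw [← lmarginal_update_of_notMem hm hmem, Function.update_idem]
        simp_rw [heach]
        rw [lintegral_const]
        rw [hone, mul_one]
    _ = (∫⋯∫⁻_Finset.univ, h ∂μ) 0 := by
        rw [huniv, lmarginal_insert _ hm hmem]
    _ = ∫⁻ x, h x ∂(Measure.pi μ) := (lintegral_eq_lmarginal_univ 0).symm

end Aux

section Key

open Set Function

variable {d : ℕ}

theorem meas_ennnorm {α : Type*} [TopologicalSpace α] [MeasurableSpace α]
    [OpensMeasurableSpace α] {f : α → ℂ} (h : Continuous f) :
    Measurable fun x => (‖f x‖₊ : ENNReal) :=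
  measurable_coe_nnreal_ennreal.comp h.nnnorm.measurable

set_option maxHeartbeats 2000000 in
theorem Continuous.combine {α : Type*} [TopologicalSpace α] (u : Finset (Fin d))
    {f g : α → Fin d → ℝ} (hf : Continuous f) (hg : Continuous g) :
    Continuous fun a => combine u (f a) (g a) := by
  apply continuous_pi
  intro k
  show Continuous fun a => if k ∈ u then f a k else g a k
  by_cases h : k ∈ u <;> simp only [h, if_true, if_false] <;> fun_prop

theorem key_claim : ∀ (n : ℕ) (u : Finset (Fin d)), uᶜ.card = n →
    ∀ g : (Fin d → ℝ) → ℂ, ContDiff ℝ (⊤ : ℕ∞) g →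
    (∫⁻ x in cube d, ∫⁻ t in cube d, (‖g (combine u x t)‖₊ : ENNReal)) ≤
      ∑ w ∈ uᶜ.powerset, ∫⁻ x in cube d, (‖mderiv w g (combine (u ∪ w) x 0)‖₊ : ENNReal) := by
  intro n
  induction n with
  | zero =>
    intro u hu g hg
    have hu' : u = Finset.univ := by
      rwa [Finset.card_eq_zero, Finset.compl_eq_empty_iff] at hu
    subst hu'
    have hc : (Finset.univ : Finset (Fin d))ᶜ = ∅ := by simp
    rw [hc]
    simp only [Finset.powerset_empty, Finset.sum_singleton, Finset.union_empty]
    have hm0 : mderiv (∅ : Finset (Fin d)) g = g := by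
      unfold mderiv; simp
    rw [hm0]
    apply le_of_eq
    have : ∀ x : Fin d → ℝ, (∫⁻ t in cube d, (‖g (combine Finset.univ x t)‖₊ : ENNReal))
        = (‖g (combine Finset.univ x 0)‖₊ : ENNReal) := by
      intro x
      simp_rw [combine_univ]
      rw [setLIntegral_const, volume_cube, mul_one]
    simp_rw [this]
  | succ n IH =>
    intro u hu g hg
    classical
    obtain ⟨j, hj⟩ : (uᶜ).Nonempty := Finset.card_pos.1 (by rw [hu]; exact Nat.succ_pos n)
    have hju : j ∉ u := Finset.mem_compl.1 hj
    have hcompl : (insert j u)ᶜ = uᶜ.erase j := Finset.compl_insert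
    have hcard : ((insert j u)ᶜ).card = n := by
      rw [hcompl, Finset.card_erase_of_mem hj, hu]; rfl
    have hjc : ∀ w ∈ ((insert j u)ᶜ).powerset, j ∉ w := by
      intro w hw hjw
      have := Finset.mem_powerset.1 hw hjw
      rw [hcompl] at this
      exact Finset.notMem_erase _ _ this
    have hg₁ : ContDiff ℝ (⊤ : ℕ∞) (fun y => g (Function.update y j 0)) :=
      hg.comp (contDiff_update_right j 0)
    have hpg : ContDiff ℝ (⊤ : ℕ∞) (pderiv j g) := contDiff_pderiv j hg
    have hgS : ∀ s : ℝ, ContDiff ℝ (⊤ : ℕ∞) (fun y => pderiv j g (Function.update y j s)) :=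
      fun s => hpg.comp (contDiff_update_right j s)
    -- continuity / measurability of integrands
    have hcF : Continuous fun p : ((Fin d → ℝ) × (Fin d → ℝ)) × ℝ =>
        pderiv j g (Function.update (combine (insert j u) p.1.1 p.1.2) j p.2) := by
      apply hpg.continuous.comp
      exact Continuous.update ((continuous_combine (insert j u)).comp continuous_fst) j
        continuous_snd
    have hmF : Measurable fun p : ((Fin d → ℝ) × (Fin d → ℝ)) × ℝ =>
        (‖pderiv j g (Function.update (combine (insert j u) p.1.1 p.1.2) j p.2)‖₊ : ENNReal) :=
      meas_ennnorm hcF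
    have hmeasA : Measurable fun p : (Fin d → ℝ) × (Fin d → ℝ) =>
        (‖g (Function.update (combine (insert j u) p.1 p.2) j 0)‖₊ : ENNReal) := by
      apply meas_ennnorm
      exact hg.continuous.comp
        (Continuous.update (continuous_combine (insert j u)) j continuous_const)
    -- pointwise FTC bound
    have hpoint : ∀ x : Fin d → ℝ, ∀ᵐ t ∂(volume.restrict (cube d)),
        (‖g (combine u x t)‖₊ : ENNReal) ≤
          (‖g (Function.update (combine (insert j u) x t) j 0)‖₊ : ENNReal)
          + ∫⁻ s in Set.Icc (0:ℝ) 1,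
              (‖pderiv j g (Function.update (combine (insert j u) x t) j s)‖₊ : ENNReal) := by
      intro x
      filter_upwards [ae_restrict_mem measurableSet_cube] with t ht
      have htj : (combine u x t) j ∈ Set.Icc (0:ℝ) 1 := by
        have h1 : combine u x t j = t j := if_neg hju
        rw [h1]
        rw [cube_eq, Set.mem_Icc] at ht
        exact ⟨ht.1 j, ht.2 j⟩
      have hb := ftc_pointwise hg j htj
      have hrw : ∀ s : ℝ, Function.update (combine u x t) j s
          = Function.update (combine (insert j u) x t) j s :=
        fun s => update_combine_insert u j s x t
      simp_rw [hrw] at hb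
      exact hb
    -- step 1 : split the integral
    have step1 : (∫⁻ x in cube d, ∫⁻ t in cube d, (‖g (combine u x t)‖₊ : ENNReal)) ≤
        (∫⁻ x in cube d, ∫⁻ t in cube d,
          (‖g (Function.update (combine (insert j u) x t) j 0)‖₊ : ENNReal))
        + ∫⁻ x in cube d, ∫⁻ t in cube d, ∫⁻ s in Set.Icc (0:ℝ) 1,
            (‖pderiv j g (Function.update (combine (insert j u) x t) j s)‖₊ : ENNReal) := by
      have inner : ∀ x : Fin d → ℝ,
          (∫⁻ t in cube d, (‖g (combine u x t)‖₊ : ENNReal)) ≤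
          (∫⁻ t in cube d,
            (‖g (Function.update (combine (insert j u) x t) j 0)‖₊ : ENNReal))
          + ∫⁻ t in cube d, ∫⁻ s in Set.Icc (0:ℝ) 1,
              (‖pderiv j g (Function.update (combine (insert j u) x t) j s)‖₊ : ENNReal) := by
        intro x
        refine le_trans (lintegral_mono_ae (hpoint x)) ?_
        have hmx : Measurable fun t : Fin d → ℝ =>
            (‖g (Function.update (combine (insert j u) x t) j 0)‖₊ : ENNReal) :=
          meas_ennnorm (hg.continuous.comp (Continuous.update
            ((continuous_combine (insert j u)).comp (Continuous.prodMk_right x)) j continuous_const))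
        rw [lintegral_add_left hmx]
      refine le_trans (lintegral_mono inner) ?_
      rw [lintegral_add_left (Measurable.lintegral_prod_right' hmeasA)]
    -- rewrite the first double integral, apply IH
    have hA : (∫⁻ x in cube d, ∫⁻ t in cube d,
          (‖g (Function.update (combine (insert j u) x t) j 0)‖₊ : ENNReal)) ≤
        ∑ w ∈ ((insert j u)ᶜ).powerset,
          ∫⁻ x in cube d, (‖mderiv w g (combine (u ∪ w) x 0)‖₊ : ENNReal) := by
      have := IH (insert j u) hcard _ hg₁
      refine le_trans (le_of_eq ?_) (le_trans this (le_of_eq (Finset.sum_congr rfl ?_)))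
      · rfl
      · intro w hw
        have hjw : j ∉ w := hjc w hw
        have h1 : mderiv w (fun y => g (Function.update y j 0))
            = fun y => mderiv w g (Function.update y j 0) := mderiv_comp_update hg hjw 0
        have h2 : insert j u ∪ w = insert j (u ∪ w) := Finset.insert_union j u w
        have h3 : j ∉ u ∪ w := by simp [hju, hjw]
        congr 1
        funext x
        simp only [h1, h2]
        rw [update_combine_zero h3]
    -- handle the second (triple) integral
    have hB : (∫⁻ x in cube d, ∫⁻ t in cube d, ∫⁻ s in Set.Icc (0:ℝ) 1,
            (‖pderiv j g (Function.update (combine (insert j u) x t) j s)‖₊ : ENNReal)) ≤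
        ∑ w ∈ ((insert j u)ᶜ).powerset,
          ∫⁻ x in cube d,
            (‖mderiv (insert j w) g (combine (u ∪ insert j w) x 0)‖₊ : ENNReal) := by
      -- swap s to the outside
      have hswap1 : ∀ x : Fin d → ℝ,
          (∫⁻ t in cube d, ∫⁻ s in Set.Icc (0:ℝ) 1,
            (‖pderiv j g (Function.update (combine (insert j u) x t) j s)‖₊ : ENNReal))
          = ∫⁻ s in Set.Icc (0:ℝ) 1, ∫⁻ t in cube d,
            (‖pderiv j g (Function.update (combine (insert j u) x t) j s)‖₊ : ENNReal) := by
        intro x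
        apply lintegral_lintegral_swap
        have c1 : Continuous fun p : (Fin d → ℝ) × ℝ =>
            pderiv j g (Function.update (combine (insert j u) x p.1) j p.2) :=
          hpg.continuous.comp (Continuous.update ((continuous_combine (insert j u)).comp
            (continuous_const.prodMk continuous_fst)) j continuous_snd)
        exact (meas_ennnorm c1).aemeasurable
      have hswap2 : (∫⁻ x in cube d, ∫⁻ s in Set.Icc (0:ℝ) 1, ∫⁻ t in cube d,
            (‖pderiv j g (Function.update (combine (insert j u) x t) j s)‖₊ : ENNReal))
          = ∫⁻ s in Set.Icc (0:ℝ) 1, ∫⁻ x in cube d, ∫⁻ t in cube d,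
            (‖pderiv j g (Function.update (combine (insert j u) x t) j s)‖₊ : ENNReal) := by
        have c2 : Continuous fun q : ((Fin d → ℝ) × ℝ) × (Fin d → ℝ) =>
            pderiv j g (Function.update (combine (insert j u) q.1.1 q.2) j q.1.2) :=
          hpg.continuous.comp (Continuous.update ((continuous_combine (insert j u)).comp
            (((continuous_fst.comp continuous_fst)).prodMk continuous_snd)) j
            (continuous_snd.comp continuous_fst))
        have hq : Measurable fun q : ((Fin d → ℝ) × ℝ) × (Fin d → ℝ) =>
            (‖pderiv j g (Function.update (combine (insert j u) q.1.1 q.2) j q.1.2)‖₊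
              : ENNReal) := meas_ennnorm c2
        have hq2 : Measurable fun p : (Fin d → ℝ) × ℝ => ∫⁻ t in cube d,
            (‖pderiv j g (Function.update (combine (insert j u) p.1 t) j p.2)‖₊ : ENNReal) :=
          Measurable.lintegral_prod_right' hq
        exact lintegral_lintegral_swap hq2.aemeasurable
      rw [lintegral_congr hswap1, hswap2]
      -- bound for each fixed s, using the IH
      have hper : ∀ s : ℝ,
          (∫⁻ x in cube d, ∫⁻ t in cube d,
            (‖pderiv j g (Function.update (combine (insert j u) x t) j s)‖₊ : ENNReal))
          ≤ ∑ w ∈ ((insert j u)ᶜ).powerset, ∫⁻ x in cube d,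
              (‖mderiv (insert j w) g (combine (u ∪ insert j w) (Function.update x j s) 0)‖₊
                : ENNReal) := by
        intro s
        have := IH (insert j u) hcard _ (hgS s)
        refine le_trans (le_of_eq rfl) (le_trans this (le_of_eq (Finset.sum_congr rfl ?_)))
        intro w hw
        have hjw : j ∉ w := hjc w hw
        have h1 : mderiv w (fun y => pderiv j g (Function.update y j s))
            = fun y => mderiv w (pderiv j g) (Function.update y j s) :=
          mderiv_comp_update hpg hjw s
        have h2 : j ∈ insert j u ∪ w := Finset.mem_union_left _ (Finset.mem_insert_self j u)
        have h3 : mderiv w (pderiv j g) = mderiv (insert j w) g := (mderiv_insert hg hjw).symm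
        have h4 : insert j u ∪ w = u ∪ insert j w := by
          rw [Finset.insert_union, Finset.union_insert]
        congr 1
        funext x
        simp only [h1]
        rw [update_combine_mem h2 s x 0, h3, h4]
      refine le_trans (lintegral_mono fun s => hper s) ?_
      -- exchange sum and integral, then use the star lemma
      have hmw : ∀ w : Finset (Fin d), Measurable fun q : ℝ × (Fin d → ℝ) =>
          (‖mderiv (insert j w) g (combine (u ∪ insert j w) (Function.update q.2 j q.1) 0)‖₊
            : ENNReal) := by
        intro w
        apply meas_ennnorm
        exact (contDiff_mderiv _ hg).continuous.comp
          (Continuous.combine _ (Continuous.update continuous_snd j continuous_fst)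
            continuous_const)
      rw [lintegral_finset_sum _ (fun w _ => ?_)]
      · refine le_of_eq (Finset.sum_congr rfl fun w hw => ?_)
        refine star_lemma (h := fun y =>
          (‖mderiv (insert j w) g (combine (u ∪ insert j w) y 0)‖₊ : ENNReal)) ?_ j
        apply meas_ennnorm
        exact (contDiff_mderiv _ hg).continuous.comp
          (Continuous.combine _ continuous_id continuous_const)
      · exact Measurable.lintegral_prod_right' (hmw w)
    -- recombine the two sums
    have hsplit : uᶜ.powerset = ((insert j u)ᶜ).powerset
        ∪ (((insert j u)ᶜ).powerset).image (insert j) := by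
      have h1 : uᶜ = insert j ((insert j u)ᶜ) := by
        rw [hcompl, Finset.insert_erase hj]
      rw [h1, Finset.powerset_insert]
    have hdisj : Disjoint (((insert j u)ᶜ).powerset)
        ((((insert j u)ᶜ).powerset).image (insert j)) := by
      rw [Finset.disjoint_left]
      intro a ha hb
      obtain ⟨b, hb', rfl⟩ := Finset.mem_image.1 hb
      exact hjc _ ha (Finset.mem_insert_self _ _)
    have hinj : ∀ w ∈ ((insert j u)ᶜ).powerset, ∀ w' ∈ ((insert j u)ᶜ).powerset,
        insert j w = insert j w' → w = w' := by
      intro w hw w' hw' h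
      rw [← Finset.erase_insert (hjc w hw), h, Finset.erase_insert (hjc w' hw')]
    rw [hsplit, Finset.sum_union hdisj, Finset.sum_image hinj]
    exact le_trans step1 (add_le_add hA hB)

end Key

section Final

open Set Function

variable {d : ℕ}

theorem lint_lt_top {h : (Fin d → ℝ) → ℂ} (hc : Continuous h) :
    (∫⁻ x in cube d, (‖h x‖₊ : ENNReal)) < ⊤ := by
  obtain ⟨C, hC⟩ := isCompact_cube.exists_bound_of_continuousOn hc.continuousOn
  calc (∫⁻ x in cube d, (‖h x‖₊ : ENNReal))
      ≤ ∫⁻ _ in cube d, ENNReal.ofReal C := by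
        apply setLIntegral_mono' measurableSet_cube
        intro x hx
        rw [← enorm_eq_nnnorm, ← ofReal_norm]
        exact ENNReal.ofReal_le_ofReal (hC x hx)
    _ = ENNReal.ofReal C := by
        rw [setLIntegral_const, volume_cube, mul_one]
    _ < ⊤ := ENNReal.ofReal_lt_top

theorem real_eq_toReal {h : (Fin d → ℝ) → ℂ}
    (hm : AEStronglyMeasurable h (volume.restrict (cube d))) :
    (∫ x in cube d, ‖h x‖) = (∫⁻ x in cube d, (‖h x‖₊ : ENNReal)).toReal := by
  rw [integral_eq_lintegral_of_nonneg_ae (Filter.Eventually.of_forall fun x => norm_nonneg _)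
    hm.norm]
  congr 1
  apply lintegral_congr
  intro x
  exact ofReal_norm _

end Final

/-- `‖f‖_{A,d,1} ≤ C_{d,1} ‖f‖_{⊤,d,1}`. -/
theorem anova_le_anchored_one {d : ℕ} (hd : 1 ≤ d) (γ : Finset (Fin d) → ℝ)
    (hγ : ∀ u, 0 < γ u) (f : (Fin d → ℝ) → ℂ) (hf : ContDiff ℝ (⊤ : ℕ∞) f) :
    anovaNorm1 γ f ≤ Cone γ * anchNorm1 γ f := by
  classical
  set L : Finset (Fin d) → ENNReal :=
    fun v => ∫⁻ x in cube d, (‖mderiv v f (combine v x 0)‖₊ : ENNReal) with hL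
  have hLcont : ∀ v : Finset (Fin d),
      Continuous fun x : Fin d → ℝ => mderiv v f (combine v x 0) := fun v =>
    (contDiff_mderiv v hf).continuous.comp (Continuous.combine v continuous_id continuous_const)
  have hLfin : ∀ v, L v ≠ ⊤ := fun v => (lint_lt_top (hLcont v)).ne
  have hIdef : ∀ v : Finset (Fin d),
      (∫ x in cube d, ‖mderiv v f (combine v x 0)‖) = (L v).toReal := fun v =>
    real_eq_toReal (hLcont v).aestronglyMeasurable
  -- the per-u bound coming from the key claim
  have hterm : ∀ u : Finset (Fin d),
      (∫ x in cube d, ‖∫ t in cube d, mderiv u f (combine u x t)‖) ≤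
        ∑ w ∈ uᶜ.powerset, (L (u ∪ w)).toReal := by
    intro u
    have hkey := key_claim (uᶜ.card) u rfl (mderiv u f) (contDiff_mderiv u hf)
    have hrw : ∀ w ∈ uᶜ.powerset,
        (∫⁻ x in cube d, (‖mderiv w (mderiv u f) (combine (u ∪ w) x 0)‖₊ : ENNReal))
          = L (u ∪ w) := by
      intro w hw
      have hdisj : Disjoint u w := by
        rw [Finset.disjoint_left]
        intro a hau haw
        exact (Finset.mem_compl.1 (Finset.mem_powerset.1 hw haw)) hau
      rw [mderiv_union hf hdisj]
    rw [Finset.sum_congr rfl hrw] at hkey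
    have hsum_ne : (∑ w ∈ uᶜ.powerset, L (u ∪ w)) ≠ ⊤ := by
      rw [← lt_top_iff_ne_top]
      exact ENNReal.sum_lt_top.2 fun w _ => (hLfin (u ∪ w)).lt_top
    have hDc : Continuous fun p : (Fin d → ℝ) × (Fin d → ℝ) =>
        mderiv u f (combine u p.1 p.2) :=
      (contDiff_mderiv u hf).continuous.comp
        (Continuous.combine u continuous_fst continuous_snd)
    have haesm : AEStronglyMeasurable
        (fun x => ∫ t in cube d, mderiv u f (combine u x t)) (volume.restrict (cube d)) :=
      (hDc.stronglyMeasurable.integral_prod_right').aestronglyMeasurable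
    calc (∫ x in cube d, ‖∫ t in cube d, mderiv u f (combine u x t)‖)
        = (∫⁻ x in cube d, (‖∫ t in cube d, mderiv u f (combine u x t)‖₊ : ENNReal)).toReal :=
          real_eq_toReal haesm
      _ ≤ (∑ w ∈ uᶜ.powerset, L (u ∪ w)).toReal := by
          apply ENNReal.toReal_mono hsum_ne
          refine le_trans (lintegral_mono fun x => ?_) hkey
          exact enorm_integral_le_lintegral_enorm _
      _ = ∑ w ∈ uᶜ.powerset, (L (u ∪ w)).toReal :=
          ENNReal.toReal_sum fun w _ => hLfin (u ∪ w)
  -- chain of inequalities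
  have step1 : anovaNorm1 γ f ≤
      ∑ u : Finset (Fin d), (γ u)⁻¹ * ∑ w ∈ uᶜ.powerset, (L (u ∪ w)).toReal := by
    apply Finset.sum_le_sum
    intro u _
    exact mul_le_mul_of_nonneg_left (hterm u) (inv_nonneg.2 (hγ u).le)
  have step2 : (∑ u : Finset (Fin d), (γ u)⁻¹ * ∑ w ∈ uᶜ.powerset, (L (u ∪ w)).toReal)
      = ∑ v : Finset (Fin d), ∑ u ∈ v.powerset, (γ u)⁻¹ * (L v).toReal := by
    simp_rw [Finset.mul_sum]
    rw [Finset.sum_sigma', Finset.sum_sigma']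
    refine Finset.sum_nbij'
      (fun p => (⟨p.1 ∪ p.2, p.1⟩ : Σ _ : Finset (Fin d), Finset (Fin d)))
      (fun q => (⟨q.2, q.1 \ q.2⟩ : Σ _ : Finset (Fin d), Finset (Fin d)))
      ?_ ?_ ?_ ?_ ?_
    · rintro ⟨u, w⟩ hp
      simp only [Finset.mem_sigma, Finset.mem_univ, Finset.mem_powerset] at hp ⊢
      exact ⟨trivial, Finset.subset_union_left⟩
    · rintro ⟨v, u⟩ hq
      simp only [Finset.mem_sigma, Finset.mem_univ, Finset.mem_powerset] at hq ⊢
      refine ⟨trivial, ?_⟩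
      intro a ha
      rw [Finset.mem_compl]
      exact (Finset.mem_sdiff.1 ha).2
    · rintro ⟨u, w⟩ hp
      simp only [Finset.mem_sigma, Finset.mem_univ, Finset.mem_powerset] at hp
      have hdisj : Disjoint u w := by
        rw [Finset.disjoint_left]
        intro a hau haw
        exact (Finset.mem_compl.1 (hp.2 haw)) hau
      simp only [Sigma.mk.inj_iff, heq_eq_eq]
      exact ⟨trivial, Finset.union_sdiff_cancel_left hdisj⟩
    · rintro ⟨v, u⟩ hq
      simp only [Finset.mem_sigma, Finset.mem_univ, Finset.mem_powerset] at hq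
      simp only [Sigma.mk.inj_iff, heq_eq_eq]
      exact ⟨Finset.union_sdiff_of_subset hq.2, trivial⟩
    · rintro ⟨u, w⟩ _
      rfl
  have hCb : ∀ v : Finset (Fin d), (∑ u ∈ v.powerset, (γ u)⁻¹) ≤ Cone γ * (γ v)⁻¹ := by
    intro v
    have h1 : (∑ u ∈ v.powerset, γ v / γ u) ≤ Cone γ := by
      unfold Cone
      exact le_ciSup (f := fun u : Finset (Fin d) => ∑ v ∈ u.powerset, γ u / γ v)
        (Set.Finite.bddAbove (Set.finite_range _)) v
    have h2 : (∑ u ∈ v.powerset, (γ u)⁻¹) = (γ v)⁻¹ * ∑ u ∈ v.powerset, γ v / γ u := by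
      rw [Finset.mul_sum]
      apply Finset.sum_congr rfl
      intro u _
      rw [div_eq_mul_inv, ← mul_assoc, inv_mul_cancel₀ (hγ v).ne', one_mul]
    rw [h2, mul_comm (Cone γ) ((γ v)⁻¹)]
    exact mul_le_mul_of_nonneg_left h1 (inv_nonneg.2 (hγ v).le)
  have step3 : (∑ v : Finset (Fin d), ∑ u ∈ v.powerset, (γ u)⁻¹ * (L v).toReal)
      ≤ Cone γ * anchNorm1 γ f := by
    unfold anchNorm1
    rw [Finset.mul_sum]
    apply Finset.sum_le_sum
    intro v _
    rw [← Finset.sum_mul, hIdef v, ← mul_assoc]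
    exact mul_le_mul_of_nonneg_right (hCb v) ENNReal.toReal_nonneg
  calc anovaNorm1 γ f ≤ _ := step1
    _ = _ := step2
    _ ≤ _ := step3
end

section
/- Let d ≥ 1 and let (γ_u)_{u⊆[d]} be strictly positive weights. Then for every C^∞ function f : ℝ^d → ℂ one has ‖f‖_{⊤,d,1} ≤ C_{d,1} · ‖f‖_{A,d,1}, where C_{d,1} = max_{u⊆[d]} ∑_{v⊆u} γ_u/γ_v. -/
open MeasureTheory

open Set

namespace AnchAux

variable {d : ℕ}

noncomputable def muIcc : Measure ℝ := volume.restrict (Icc 0 1)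

instance : IsProbabilityMeasure muIcc :=
  ⟨by simp [muIcc, Real.volume_Icc]⟩

noncomputable def cubeM (d : ℕ) : Measure (Fin d → ℝ) := Measure.pi fun _ => muIcc

instance : IsProbabilityMeasure (cubeM d) := by unfold cubeM; infer_instance

instance : SFinite (cubeM d) := by infer_instance

lemma isCompact_cube (d : ℕ) : IsCompact (cube d) :=
  isCompact_univ_pi fun _ => isCompact_Icc

lemma volume_restrict_cube (d : ℕ) : volume.restrict (cube d) = cubeM d := by
  refine (Measure.pi_eq fun s hs => ?_).symm
  rw [cube, Measure.restrict_apply (MeasurableSet.univ_pi fun i => (hs i))]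
  rw [← Set.pi_inter_distrib]
  rw [volume_pi_pi]
  refine Finset.prod_congr rfl fun i _ => ?_
  rw [muIcc, Measure.restrict_apply (hs i)]

lemma integrable_cube {E : Type*} [NormedAddCommGroup E] (F : (Fin d → ℝ) → E)
    (hF : Continuous F) :
    Integrable F (cubeM d) := by
  rw [← volume_restrict_cube]
  exact hF.locallyIntegrable.integrableOn_isCompact (isCompact_cube d)

end AnchAux

namespace AnchAux

variable {d : ℕ}

lemma measurePreserving_proj (p : Fin d → Prop) [DecidablePred p] :
    MeasurePreserving (fun x : Fin d → ℝ => fun i : {i // p i} => x i)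
      (cubeM d) (Measure.pi fun _ : {i // p i} => muIcc) := by
  have h := measurePreserving_piEquivPiSubtypeProd (fun _ : Fin d => muIcc) p
  have hfst : MeasurePreserving (Prod.fst)
      ((Measure.pi fun _ : {i // p i} => muIcc).prod (Measure.pi fun _ : {i // ¬ p i} => muIcc))
      (Measure.pi fun _ : {i // p i} => muIcc) := by
    constructor
    · exact measurable_fst
    · rw [Measure.map_fst_prod]
      simp
  exact hfst.comp h

lemma measurePreserving_combine (v : Finset (Fin d)) :
    MeasurePreserving (fun q : (Fin d → ℝ) × (Fin d → ℝ) => combine v q.1 q.2)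
      ((cubeM d).prod (cubeM d)) (cubeM d) := by
  classical
  have h := measurePreserving_piEquivPiSubtypeProd (fun _ : Fin d => muIcc)
    (fun i : Fin d => i ∈ v)
  have hA := measurePreserving_proj (d := d) (fun i => i ∈ v)
  have hB := measurePreserving_proj (d := d) (fun i => ¬ i ∈ v)
  have hsymm := (MeasurePreserving.symm _ h)
  have hprod := hA.prod hB
  have comp := hsymm.comp hprod
  convert comp using 1
  rfl
  rfl

lemma measurePreserving_update (j : Fin d) :
    MeasurePreserving (fun q : ℝ × (Fin d → ℝ) => Function.update q.2 j q.1)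
      (muIcc.prod (cubeM d)) (cubeM d) := by
  classical
  have h := measurePreserving_piEquivPiSubtypeProd (fun _ : Fin d => muIcc)
    (fun i : Fin d => i = j)
  have hB := measurePreserving_proj (d := d) (fun i => ¬ i = j)
  have hFU : MeasurePreserving (MeasurableEquiv.funUnique {i : Fin d // i = j} ℝ)
      (Measure.pi fun _ => muIcc) muIcc := measurePreserving_funUnique muIcc _
  have hA : MeasurePreserving (fun s : ℝ => fun _ : {i : Fin d // i = j} => s)
      muIcc (Measure.pi fun _ : {i : Fin d // i = j} => muIcc) :=
    MeasurePreserving.symm _ hFU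
  have hsymm := (MeasurePreserving.symm _ h)
  have hinst : (Fintype.subtypeEq j) = (Subtype.fintype fun i : Fin d => i = j) :=
    Subsingleton.elim _ _
  rw [hinst] at hA
  have comp := hsymm.comp (hA.prod hB)
  convert comp using 1
  ext q i
  by_cases hi : i = j
  · subst hi
    simp [MeasurableEquiv.piEquivPiSubtypeProd, Equiv.piEquivPiSubtypeProd, Function.comp]
  · simp [Function.update_of_ne hi, MeasurableEquiv.piEquivPiSubtypeProd,
      Equiv.piEquivPiSubtypeProd, Function.comp, hi]
  rfl

end AnchAux

namespace AnchAux

variable {d : ℕ} {E : Type*} [NormedAddCommGroup E] [NormedSpace ℝ E] [CompleteSpace E]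

lemma integrable_comp_combine {v : Finset (Fin d)} {F : (Fin d → ℝ) → E}
    (hF : Integrable F (cubeM d)) :
    Integrable (fun q : (Fin d → ℝ) × (Fin d → ℝ) => F (combine v q.1 q.2))
      ((cubeM d).prod (cubeM d)) :=
  ((measurePreserving_combine v).integrable_comp hF.aestronglyMeasurable).mpr hF

lemma integral_cube_combine (v : Finset (Fin d)) (F : (Fin d → ℝ) → E)
    (hF : Integrable F (cubeM d)) :
    ∫ x, ∫ t, F (combine v x t) ∂cubeM d ∂cubeM d = ∫ y, F y ∂cubeM d := by
  have mp := measurePreserving_combine (d := d) v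
  have h1 := MeasureTheory.integral_integral (f := fun x t => F (combine v x t))
    (integrable_comp_combine hF)
  rw [h1]
  have hFm : AEStronglyMeasurable F (Measure.map
      (fun q : (Fin d → ℝ) × (Fin d → ℝ) => combine v q.1 q.2)
      ((cubeM d).prod (cubeM d))) := by
    rw [mp.map_eq]; exact hF.aestronglyMeasurable
  rw [← integral_map mp.measurable.aemeasurable hFm, mp.map_eq]

lemma integrable_inner_combine (v : Finset (Fin d)) (F : (Fin d → ℝ) → E)
    (hF : Integrable F (cubeM d)) :
    Integrable (fun x => ∫ t, F (combine v x t) ∂cubeM d) (cubeM d) :=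
  (integrable_comp_combine hF).integral_prod_left

lemma integrable_comp_update {j : Fin d} {F : (Fin d → ℝ) → E}
    (hF : Integrable F (cubeM d)) :
    Integrable (fun q : ℝ × (Fin d → ℝ) => F (Function.update q.2 j q.1))
      (muIcc.prod (cubeM d)) :=
  ((measurePreserving_update j).integrable_comp hF.aestronglyMeasurable).mpr hF

lemma integral_cube_update (j : Fin d) (F : (Fin d → ℝ) → E)
    (hF : Integrable F (cubeM d)) :
    ∫ t, F t ∂cubeM d = ∫ s, ∫ t, F (Function.update t j s) ∂cubeM d ∂muIcc := by
  have mp := measurePreserving_update (d := d) j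
  have h1 := MeasureTheory.integral_integral (f := fun s t => F (Function.update t j s))
    (integrable_comp_update hF)
  rw [h1]
  have hFm : AEStronglyMeasurable F (Measure.map
      (fun q : ℝ × (Fin d → ℝ) => Function.update q.2 j q.1)
      (muIcc.prod (cubeM d))) := by
    rw [mp.map_eq]; exact hF.aestronglyMeasurable
  rw [← integral_map mp.measurable.aemeasurable hFm, mp.map_eq]

lemma integrable_inner_update (j : Fin d) (F : (Fin d → ℝ) → E)
    (hF : Integrable F (cubeM d)) :
    Integrable (fun s => ∫ t, F (Function.update t j s) ∂cubeM d) muIcc :=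
  (integrable_comp_update hF).integral_prod_left

end AnchAux

namespace AnchAux

variable {d : ℕ}

lemma contDiff_pderiv {f : (Fin d → ℝ) → ℂ} (j : Fin d) (hf : ContDiff ℝ (⊤ : ℕ∞) f) :
    ContDiff ℝ (⊤ : ℕ∞) (pderiv j f) :=
  (hf.fderiv_right (m := (⊤ : ℕ∞)) (by simp)).clm_apply contDiff_const

lemma contDiff_foldr (l : List (Fin d)) {f : (Fin d → ℝ) → ℂ} (hf : ContDiff ℝ (⊤ : ℕ∞) f) :
    ContDiff ℝ (⊤ : ℕ∞) (l.foldr pderiv f) := by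
  induction l with
  | nil => exact hf
  | cons j l ih => exact contDiff_pderiv j ih

lemma contDiff_mderiv (u : Finset (Fin d)) {f : (Fin d → ℝ) → ℂ} (hf : ContDiff ℝ (⊤ : ℕ∞) f) :
    ContDiff ℝ (⊤ : ℕ∞) (mderiv u f) := contDiff_foldr _ hf

lemma pderiv_comm {f : (Fin d → ℝ) → ℂ} (hf : ContDiff ℝ (⊤ : ℕ∞) f) (i j : Fin d) :
    pderiv i (pderiv j f) = pderiv j (pderiv i f) := by
  funext x
  have hdf : Differentiable ℝ (fderiv ℝ f) :=
    (hf.fderiv_right (m := (⊤ : ℕ∞)) (by simp)).differentiable (by simp)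
  have h1 : ∀ (i j : Fin d), pderiv i (pderiv j f) x
      = fderiv ℝ (fderiv ℝ f) x (Pi.single i 1) (Pi.single j 1) := by
    intro i j
    show fderiv ℝ (fun y => fderiv ℝ f y (Pi.single j 1)) x (Pi.single i 1) = _
    rw [fderiv_clm_apply (hdf x) (differentiableAt_const _)]
    simp
  rw [h1, h1]
  exact second_derivative_symmetric (fun y => (hf.differentiable (by simp) y).hasFDerivAt)
    ((hdf x).hasFDerivAt) _ _

lemma foldr_perm {l₁ l₂ : List (Fin d)} {f : (Fin d → ℝ) → ℂ} (hf : ContDiff ℝ (⊤ : ℕ∞) f)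
    (p : l₁.Perm l₂) : l₁.foldr pderiv f = l₂.foldr pderiv f := by
  induction p with
  | nil => rfl
  | cons x p ih => simp only [List.foldr_cons, ih]
  | swap x y l => exact pderiv_comm (contDiff_foldr l hf) y x
  | trans p q ih ih' => exact ih.trans ih'

lemma mderiv_insert {u : Finset (Fin d)} {j : Fin d} (hj : j ∉ u) {f : (Fin d → ℝ) → ℂ}
    (hf : ContDiff ℝ (⊤ : ℕ∞) f) : mderiv (insert j u) f = pderiv j (mderiv u f) :=
  foldr_perm hf (Finset.toList_insert hj)

lemma hasDerivAt_comp_update {G : (Fin d → ℝ) → ℂ} (hG : ContDiff ℝ (⊤ : ℕ∞) G) (x : Fin d → ℝ)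
    (j : Fin d) (s : ℝ) :
    HasDerivAt (fun r => G (Function.update x j r)) (pderiv j G (Function.update x j s)) s :=
  (hG.differentiable (by simp) _).hasFDerivAt.comp_hasDerivAt s (hasDerivAt_update x j s)

lemma one_dim {g g' : ℝ → ℂ} (hg : ∀ s, HasDerivAt g (g' s) s) (hgc : Continuous g)
    (hg'c : Continuous g') :
    g 0 = (∫ s in Icc (0:ℝ) 1, g s) - ∫ s in Icc (0:ℝ) 1, (1 - s) • g' s := by
  have key : ∀ s : ℝ, HasDerivAt (fun t => (1 - t) • g t) ((1 - s) • g' s - g s) s := by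
    intro s
    have h1 : HasDerivAt (fun t : ℝ => 1 - t) (-1) s := by
      simpa using (hasDerivAt_id s).const_sub 1
    have h2 := h1.smul (hg s)
    convert h2 using 1
    · rfl
    · rfl
    · simp [sub_eq_add_neg]
  have hc1 : Continuous fun s : ℝ => (1 - s) • g' s := by continuity
  have h2 := intervalIntegral.integral_eq_sub_of_hasDerivAt
    (f := fun t : ℝ => (1 - t) • g t) (f' := fun s => (1 - s) • g' s - g s)
    (fun s _ => key s) ((hc1.sub hgc).intervalIntegrable 0 1)
  rw [intervalIntegral.integral_sub (hc1.intervalIntegrable 0 1)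
    (hgc.intervalIntegrable 0 1)] at h2
  simp only [sub_self, zero_smul, one_smul, sub_zero, zero_sub] at h2
  have e1 : ∫ s in Icc (0:ℝ) 1, g s = ∫ s in (0:ℝ)..1, g s := by
    rw [intervalIntegral.integral_of_le (by norm_num : (0:ℝ) ≤ 1), integral_Icc_eq_integral_Ioc]
  have e2 : ∫ s in Icc (0:ℝ) 1, (1 - s) • g' s = ∫ s in (0:ℝ)..1, (1 - s) • g' s := by
    rw [intervalIntegral.integral_of_le (by norm_num : (0:ℝ) ≤ 1), integral_Icc_eq_integral_Ioc]
  rw [e1, e2]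
  linear_combination h2

end AnchAux

namespace AnchAux

variable {d : ℕ}

lemma continuous_combine_left (v : Finset (Fin d)) (x : Fin d → ℝ) :
    Continuous fun t => combine v t x := by
  refine continuous_pi fun i => ?_
  by_cases hi : i ∈ v <;> simp only [combine, hi, if_true, if_false]
  · exact continuous_apply i
  · exact continuous_const

lemma continuous_combine_right (v : Finset (Fin d)) (x : Fin d → ℝ) :
    Continuous fun t => combine v x t := by
  refine continuous_pi fun i => ?_
  by_cases hi : i ∈ v <;> simp only [combine, hi, if_true, if_false]
  · exact continuous_const
  · exact continuous_apply i

lemma combine_insert_update {c : Finset (Fin d)} {j : Fin d} (hj : j ∉ c)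
    (x t : Fin d → ℝ) (s : ℝ) :
    combine (insert j c) (Function.update t j s) x
      = combine c t (Function.update x j s) := by
  funext i
  by_cases hi : i = j
  · subst hi; simp [combine, hj]
  · by_cases hic : i ∈ c <;>
      simp [combine, Function.update_of_ne hi, Finset.mem_insert, hi, hic]

lemma slice_step {c w : Finset (Fin d)} {j : Fin d} (hj : j ∉ c) (hw : w ⊆ c)
    (H : (Fin d → ℝ) → ℂ) (hH : Continuous H) (x : Fin d → ℝ) :
    ((∫ t, (∏ i ∈ w, (1 - t i)) • H (combine (insert j c) t x) ∂cubeM d)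
      = ∫ s, ∫ t, (∏ i ∈ w, (1 - t i)) •
          H (combine c t (Function.update x j s)) ∂cubeM d ∂muIcc)
    ∧ Integrable (fun s => ∫ t, (∏ i ∈ w, (1 - t i)) •
        H (combine c t (Function.update x j s)) ∂cubeM d) muIcc := by
  set Ψ : (Fin d → ℝ) → ℂ :=
    fun r => (∏ i ∈ w, (1 - r i)) • H (combine (insert j c) r x) with hΨ
  have hΨc : Continuous Ψ := by
    refine (?_ : Continuous fun r : Fin d → ℝ => ∏ i ∈ w, (1 - r i)).smul (hH.comp (continuous_combine_left _ x))
    exact continuous_finset_prod w fun i _ => continuous_const.sub (continuous_apply i)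
  have hkey : ∀ (s : ℝ) (t : Fin d → ℝ), Ψ (Function.update t j s)
      = (∏ i ∈ w, (1 - t i)) • H (combine c t (Function.update x j s)) := by
    intro s t
    rw [hΨ]
    simp only
    rw [combine_insert_update hj]
    congr 1
    refine Finset.prod_congr rfl fun i hi => ?_
    have : i ≠ j := fun h => hj (h ▸ hw hi)
    rw [Function.update_of_ne this]
  constructor
  · have h1 := integral_cube_update j Ψ (integrable_cube Ψ hΨc)
    rw [h1]
    refine integral_congr_ae (Filter.Eventually.of_forall fun s => ?_)
    refine integral_congr_ae (Filter.Eventually.of_forall fun t => ?_)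
    exact hkey s t
  · have h2 := integrable_inner_update j Ψ (integrable_cube Ψ hΨc)
    refine h2.congr (Filter.Eventually.of_forall fun s => ?_)
    refine integral_congr_ae (Filter.Eventually.of_forall fun t => ?_)
    exact hkey s t

lemma slice_step' {c w : Finset (Fin d)} {j : Fin d} (hj : j ∉ c) (hw : w ⊆ c)
    (H : (Fin d → ℝ) → ℂ) (hH : Continuous H) (x : Fin d → ℝ) :
    ((∫ t, (∏ i ∈ insert j w, (1 - t i)) • H (combine (insert j c) t x) ∂cubeM d)
      = ∫ s, (1 - s) • ∫ t, (∏ i ∈ w, (1 - t i)) •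
          H (combine c t (Function.update x j s)) ∂cubeM d ∂muIcc)
    ∧ Integrable (fun s => (1 - s) • ∫ t, (∏ i ∈ w, (1 - t i)) •
        H (combine c t (Function.update x j s)) ∂cubeM d) muIcc := by
  have hjw : j ∉ w := fun h => hj (hw h)
  set Ψ : (Fin d → ℝ) → ℂ :=
    fun r => (∏ i ∈ insert j w, (1 - r i)) • H (combine (insert j c) r x) with hΨ
  have hΨc : Continuous Ψ := by
    refine (?_ : Continuous fun r : Fin d → ℝ => ∏ i ∈ insert j w, (1 - r i)).smul (hH.comp (continuous_combine_left _ x))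
    exact continuous_finset_prod _ fun i _ => continuous_const.sub (continuous_apply i)
  have hkey : ∀ (s : ℝ) (t : Fin d → ℝ), Ψ (Function.update t j s)
      = (1 - s) • ((∏ i ∈ w, (1 - t i)) •
          H (combine c t (Function.update x j s))) := by
    intro s t
    rw [hΨ]
    simp only
    rw [combine_insert_update hj, Finset.prod_insert hjw, Function.update_self, mul_smul]
    congr 2
    refine Finset.prod_congr rfl fun i hi => ?_
    have : i ≠ j := fun h => hjw (h ▸ hi)
    rw [Function.update_of_ne this]
  have hptwise : ∀ s : ℝ, (∫ t, Ψ (Function.update t j s) ∂cubeM d)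
      = (1 - s) • ∫ t, (∏ i ∈ w, (1 - t i)) •
          H (combine c t (Function.update x j s)) ∂cubeM d := by
    intro s
    rw [← integral_smul]
    refine integral_congr_ae (Filter.Eventually.of_forall fun t => ?_)
    exact hkey s t
  constructor
  · have h1 := integral_cube_update j Ψ (integrable_cube Ψ hΨc)
    rw [h1]
    exact integral_congr_ae (Filter.Eventually.of_forall hptwise)
  · exact (integrable_inner_update j Ψ (integrable_cube Ψ hΨc)).congr
      (Filter.Eventually.of_forall hptwise)

end AnchAux

namespace AnchAux

variable {d : ℕ}

lemma master {f : (Fin d → ℝ) → ℂ} (hf : ContDiff ℝ (⊤ : ℕ∞) f) :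
    ∀ (c u : Finset (Fin d)), Disjoint u c → ∀ x : Fin d → ℝ,
    mderiv u f (combine c 0 x) = ∑ w ∈ c.powerset, ((-1 : ℝ) ^ w.card) •
      ∫ t, (∏ i ∈ w, (1 - t i)) • mderiv (u ∪ w) f (combine c t x) ∂cubeM d := by
  intro c
  induction c using Finset.induction_on with
  | empty =>
    intro u _ x
    have hx : ∀ z : Fin d → ℝ, combine (∅ : Finset (Fin d)) z x = x := by
      intro z; funext i; simp [combine]
    simp only [Finset.powerset_empty, Finset.sum_singleton, Finset.card_empty, pow_zero,
      Finset.prod_empty, one_smul, Finset.union_empty, hx, integral_const, measure_univ,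
      ENNReal.toReal_one, smul_eq_mul, one_smul, probReal_univ]
  | @insert j c hj ih =>
    intro u hdisj x
    classical
    have hju : j ∉ u := fun h =>
      Finset.disjoint_left.mp hdisj h (Finset.mem_insert_self j c)
    have hdc : Disjoint u c := hdisj.mono_right (Finset.subset_insert j c)
    have hdc' : Disjoint (insert j u) c := by
      rw [Finset.disjoint_left]
      intro a ha hac
      rcases Finset.mem_insert.mp ha with rfl | ha
      · exact hj hac
      · exact Finset.disjoint_left.mp hdc ha hac
    have hG : ContDiff ℝ (⊤ : ℕ∞) (mderiv u f) := contDiff_mderiv u hf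
    have hG' : ContDiff ℝ (⊤ : ℕ∞) (mderiv (insert j u) f) := contDiff_mderiv _ hf
    set y := combine c 0 x with hydef
    have keyU : ∀ s : ℝ, Function.update y j s = combine c 0 (Function.update x j s) := by
      intro s; funext i
      by_cases hi : i = j
      · rw [hi, Function.update_self]
        simp [hydef, combine, hj]
      · by_cases hic : i ∈ c <;>
          simp [hydef, combine, Function.update_of_ne hi, hic]
    have key0 : combine (insert j c) 0 x = Function.update y j 0 := by
      funext i
      by_cases hi : i = j
      · rw [hi, Function.update_self]
        simp [hydef, combine]
      · by_cases hic : i ∈ c <;>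
          simp [hydef, combine, Function.update_of_ne hi, Finset.mem_insert, hi, hic]
    set g : ℝ → ℂ := fun s => mderiv u f (Function.update y j s) with hgdef
    set g' : ℝ → ℂ := fun s => mderiv (insert j u) f (Function.update y j s) with hg'def
    have hgd : ∀ s, HasDerivAt g (g' s) s := by
      intro s
      have h := hasDerivAt_comp_update hG y j s
      have : g' s = pderiv j (mderiv u f) (Function.update y j s) := by
        rw [hg'def]; simp only; rw [mderiv_insert hju hf]
      rw [this]
      exact h
    have hcu : Continuous fun s : ℝ => Function.update y j s := by
      have : (fun s : ℝ => Function.update y j s) =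
          fun s : ℝ => Function.update (id y) j (id s) := rfl
      fun_prop
    have hgc : Continuous g := hG.continuous.comp hcu
    have hg'c : Continuous g' := hG'.continuous.comp hcu
    have h1d := one_dim hgd hgc hg'c
    -- rewrite the two integrals over [0,1]
    have hmu : (volume.restrict (Icc (0:ℝ) 1)) = muIcc := rfl
    rw [show (∫ s in Icc (0:ℝ) 1, g s) = ∫ s, g s ∂muIcc from rfl,
      show (∫ s in Icc (0:ℝ) 1, (1 - s) • g' s) = ∫ s, (1 - s) • g' s ∂muIcc from rfl] at h1d
    -- identify g and g' pointwise with sums via the induction hypothesis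
    have hg_eq : ∀ s : ℝ, g s = ∑ w ∈ c.powerset, ((-1 : ℝ) ^ w.card) •
        ∫ t, (∏ i ∈ w, (1 - t i)) •
          mderiv (u ∪ w) f (combine c t (Function.update x j s)) ∂cubeM d := by
      intro s
      rw [hgdef]; simp only
      rw [keyU s]
      exact ih u hdc (Function.update x j s)
    have hg'_eq : ∀ s : ℝ, g' s = ∑ w ∈ c.powerset, ((-1 : ℝ) ^ w.card) •
        ∫ t, (∏ i ∈ w, (1 - t i)) •
          mderiv (insert j (u ∪ w)) f (combine c t (Function.update x j s)) ∂cubeM d := by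
      intro s
      rw [hg'def]; simp only
      rw [keyU s]
      have := ih (insert j u) hdc' (Function.update x j s)
      simpa only [Finset.insert_union] using this
    -- part A
    have eA : ∫ s, g s ∂muIcc = ∑ w ∈ c.powerset, ((-1 : ℝ) ^ w.card) •
        ∫ t, (∏ i ∈ w, (1 - t i)) •
          mderiv (u ∪ w) f (combine (insert j c) t x) ∂cubeM d := by
      rw [integral_congr_ae (Filter.Eventually.of_forall hg_eq)]
      rw [integral_finset_sum (μ := muIcc) c.powerset
        (f := fun w s => ((-1 : ℝ) ^ w.card) • ∫ t, (∏ i ∈ w, (1 - t i)) •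
          mderiv (u ∪ w) f (combine c t (Function.update x j s)) ∂cubeM d)
        (fun w hw => by
          exact ((slice_step hj (Finset.mem_powerset.mp hw) (mderiv (u ∪ w) f)
            (contDiff_mderiv _ hf).continuous x).2.smul ((-1 : ℝ) ^ w.card)))]
      refine Finset.sum_congr rfl fun w hw => ?_
      rw [integral_smul, ← (slice_step hj (Finset.mem_powerset.mp hw) (mderiv (u ∪ w) f)
          (contDiff_mderiv _ hf).continuous x).1]
    -- part B
    have eB : ∫ s, (1 - s) • g' s ∂muIcc = ∑ w ∈ c.powerset, ((-1 : ℝ) ^ w.card) •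
        ∫ t, (∏ i ∈ insert j w, (1 - t i)) •
          mderiv (insert j (u ∪ w)) f (combine (insert j c) t x) ∂cubeM d := by
      have hptw : (fun s : ℝ => (1 - s) • g' s)
          = fun s => ∑ w ∈ c.powerset, ((-1 : ℝ) ^ w.card) •
            ((1 - s) • ∫ t, (∏ i ∈ w, (1 - t i)) •
              mderiv (insert j (u ∪ w)) f (combine c t (Function.update x j s)) ∂cubeM d) := by
        funext s
        rw [hg'_eq s, Finset.smul_sum]
        exact Finset.sum_congr rfl fun w _ => smul_comm _ _ _
      rw [hptw]
      rw [integral_finset_sum (μ := muIcc) c.powerset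
        (f := fun w s => ((-1 : ℝ) ^ w.card) • ((1 - s) • ∫ t, (∏ i ∈ w, (1 - t i)) •
          mderiv (insert j (u ∪ w)) f (combine c t (Function.update x j s)) ∂cubeM d))
        (fun w hw => by
          exact ((slice_step' hj (Finset.mem_powerset.mp hw) (mderiv (insert j (u ∪ w)) f)
            (contDiff_mderiv _ hf).continuous x).2.smul ((-1 : ℝ) ^ w.card)))]
      refine Finset.sum_congr rfl fun w hw => ?_
      rw [integral_smul, ← (slice_step' hj (Finset.mem_powerset.mp hw)
        (mderiv (insert j (u ∪ w)) f) (contDiff_mderiv _ hf).continuous x).1]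
    -- assemble
    have hLHS : mderiv u f (combine (insert j c) 0 x) = g 0 := by
      rw [key0]
    rw [hLHS, h1d, eA, eB]
    -- now expand the RHS sum over the powerset of `insert j c`
    have hinj : ∀ a ∈ c.powerset, ∀ b ∈ c.powerset, insert j a = insert j b → a = b := by
      intro a ha b hb hab
      have hja : j ∉ a := fun h => hj (Finset.mem_powerset.mp ha h)
      have hjb : j ∉ b := fun h => hj (Finset.mem_powerset.mp hb h)
      have : (insert j a).erase j = (insert j b).erase j := by rw [hab]
      rwa [Finset.erase_insert hja, Finset.erase_insert hjb] at this
    rw [Finset.powerset_insert, Finset.sum_union, Finset.sum_image hinj]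
    · have e5 : ∑ w ∈ c.powerset, ((-1 : ℝ) ^ (insert j w).card) •
          ∫ t, (∏ i ∈ insert j w, (1 - t i)) •
            mderiv (u ∪ insert j w) f (combine (insert j c) t x) ∂cubeM d
          = - ∑ w ∈ c.powerset, ((-1 : ℝ) ^ w.card) •
          ∫ t, (∏ i ∈ insert j w, (1 - t i)) •
            mderiv (insert j (u ∪ w)) f (combine (insert j c) t x) ∂cubeM d := by
        rw [← Finset.sum_neg_distrib]
        refine Finset.sum_congr rfl fun w hw => ?_
        have hjw : j ∉ w := fun h => hj (Finset.mem_powerset.mp hw h)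
        rw [Finset.card_insert_of_notMem hjw, pow_succ, Finset.union_insert, mul_smul,
          neg_one_smul, smul_neg]
      rw [e5]
      exact sub_eq_add_neg _ _
    · rw [Finset.disjoint_left]
      intro a ha hb
      rcases Finset.mem_image.mp hb with ⟨b, hbmem, rfl⟩
      have : j ∈ insert j b := Finset.mem_insert_self j b
      exact hj (Finset.mem_powerset.mp ha this)

end AnchAux

namespace AnchAux

variable {d : ℕ}

lemma combine_compl (u : Finset (Fin d)) (t x : Fin d → ℝ) :
    combine uᶜ t x = combine u x t := by
  funext i
  by_cases hi : i ∈ u <;> simp [combine, hi, Finset.mem_compl]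

lemma combine_assoc {u v : Finset (Fin d)} (huv : u ⊆ v) (x a b : Fin d → ℝ) :
    combine u x (combine v a b) = combine v (combine u x a) b := by
  funext i
  by_cases hiu : i ∈ u
  · simp [combine, hiu, huv hiu]
  · by_cases hiv : i ∈ v <;> simp [combine, hiu, hiv]

lemma ae_mem_cube : ∀ᵐ t ∂cubeM d, t ∈ cube d := by
  rw [← volume_restrict_cube]
  exact ae_restrict_mem (MeasurableSet.univ_pi fun _ => measurableSet_Icc)

lemma prod_weight_le_one {w : Finset (Fin d)} {t : Fin d → ℝ} (ht : t ∈ cube d) :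
    |∏ i ∈ w, (1 - t i)| ≤ 1 := by
  have h01 : ∀ i, 0 ≤ 1 - t i ∧ 1 - t i ≤ 1 := by
    intro i
    have := ht i (Set.mem_univ i)
    simp only [Set.mem_Icc] at this
    constructor <;> linarith [this.1, this.2]
  rw [abs_of_nonneg (Finset.prod_nonneg fun i _ => (h01 i).1)]
  exact Finset.prod_le_one (fun i _ => (h01 i).1) (fun i _ => (h01 i).2)

lemma step2 {f : (Fin d → ℝ) → ℂ} (hf : ContDiff ℝ (⊤ : ℕ∞) f) (u w : Finset (Fin d))
    (hdisj : Disjoint u w) :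
    (∫ x, ‖∫ t, (∏ i ∈ w, (1 - (combine u x t) i)) •
        mderiv (u ∪ w) f (combine u x t) ∂cubeM d‖ ∂cubeM d)
      ≤ ∫ x, ‖∫ t, mderiv (u ∪ w) f (combine (u ∪ w) x t) ∂cubeM d‖ ∂cubeM d := by
  classical
  set v := u ∪ w with hv
  have huv : u ⊆ v := Finset.subset_union_left
  have hwv : w ⊆ v := Finset.subset_union_right
  set G := mderiv v f with hGdef
  have hGc : Continuous G := (contDiff_mderiv v hf).continuous
  have hGint : Integrable G (cubeM d) := integrable_cube G hGc
  set F : (Fin d → ℝ) → ℂ := fun r => (∏ i ∈ w, (1 - r i)) • G r with hFdef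
  have hFc : Continuous F := by
    refine (?_ : Continuous fun r : Fin d → ℝ => ∏ i ∈ w, (1 - r i)).smul hGc
    exact continuous_finset_prod w fun i _ => continuous_const.sub (continuous_apply i)
  set W : (Fin d → ℝ) → ℂ := fun y => ∫ r, G (combine v y r) ∂cubeM d with hWdef
  have hW : Integrable W (cubeM d) := integrable_inner_combine v G hGint
  -- (i) pointwise identity in x
  have hi : ∀ x : Fin d → ℝ, (∫ t, F (combine u x t) ∂cubeM d)
      = ∫ a, (∏ i ∈ w, (1 - a i)) • W (combine u x a) ∂cubeM d := by
    intro x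
    have hcont : Continuous fun t => F (combine u x t) :=
      hFc.comp (continuous_combine_right u x)
    have h1 := integral_cube_combine v (fun t => F (combine u x t))
      (integrable_cube _ hcont)
    rw [← h1]
    refine integral_congr_ae (Filter.Eventually.of_forall fun a => ?_)
    simp only
    have h2 : ∀ b : Fin d → ℝ, F (combine u x (combine v a b))
        = (∏ i ∈ w, (1 - a i)) • G (combine v (combine u x a) b) := by
      intro b
      rw [combine_assoc huv]
      rw [hFdef]
      simp only
      congr 1
      refine Finset.prod_congr rfl fun i hiw => ?_
      have hinu : i ∉ u := Finset.disjoint_right.mp hdisj hiw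
      simp [combine, hwv hiw, hinu]
    rw [integral_congr_ae (Filter.Eventually.of_forall h2), integral_smul]
  -- integrability facts
  have hnormW_prod : Integrable
      (fun q : (Fin d → ℝ) × (Fin d → ℝ) => ‖W (combine u q.1 q.2)‖)
      ((cubeM d).prod (cubeM d)) :=
    integrable_comp_combine (F := fun y => ‖W y‖) hW.norm
  have hae := hnormW_prod.prod_right_ae
  have hLHSint : Integrable (fun x => ‖∫ t, F (combine u x t) ∂cubeM d‖) (cubeM d) :=
    (integrable_inner_combine u F (integrable_cube F hFc)).norm
  have hRHSint : Integrable (fun x => ∫ a, ‖W (combine u x a)‖ ∂cubeM d) (cubeM d) :=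
    integrable_inner_combine u (fun y => ‖W y‖) hW.norm
  -- main comparison
  have hmono : (∫ x, ‖∫ t, F (combine u x t) ∂cubeM d‖ ∂cubeM d)
      ≤ ∫ x, ∫ a, ‖W (combine u x a)‖ ∂cubeM d ∂cubeM d := by
    refine integral_mono_ae hLHSint hRHSint ?_
    filter_upwards [hae] with x hx
    rw [hi x]
    refine norm_integral_le_of_norm_le hx ?_
    filter_upwards [ae_mem_cube] with a ha
    rw [norm_smul]
    have h1 : ‖(∏ i ∈ w, (1 - a i))‖ ≤ 1 := by
      rw [Real.norm_eq_abs]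
      exact prod_weight_le_one ha
    calc ‖∏ i ∈ w, (1 - a i)‖ * ‖W (combine u x a)‖
        ≤ 1 * ‖W (combine u x a)‖ := by
          exact mul_le_mul_of_nonneg_right h1 (norm_nonneg _)
      _ = ‖W (combine u x a)‖ := one_mul _
  calc (∫ x, ‖∫ t, F (combine u x t) ∂cubeM d‖ ∂cubeM d)
      ≤ ∫ x, ∫ a, ‖W (combine u x a)‖ ∂cubeM d ∂cubeM d := hmono
    _ = ∫ y, ‖W y‖ ∂cubeM d := integral_cube_combine u (fun y => ‖W y‖) hW.norm
    _ = ∫ x, ‖∫ t, G (combine v x t) ∂cubeM d‖ ∂cubeM d := rfl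

end AnchAux

namespace AnchAux

variable {d : ℕ}

lemma stepU {f : (Fin d → ℝ) → ℂ} (hf : ContDiff ℝ (⊤ : ℕ∞) f) (u : Finset (Fin d)) :
    (∫ x, ‖mderiv u f (combine u x 0)‖ ∂cubeM d)
      ≤ ∑ w ∈ uᶜ.powerset,
          ∫ x, ‖∫ t, mderiv (u ∪ w) f (combine (u ∪ w) x t) ∂cubeM d‖ ∂cubeM d := by
  classical
  have hcz : ∀ x : Fin d → ℝ, combine u x 0 = combine uᶜ 0 x := by
    intro x; funext i; by_cases hi : i ∈ u <;> simp [combine, hi, Finset.mem_compl]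
  have hdisj : Disjoint u uᶜ := disjoint_compl_right
  have hpt : ∀ x : Fin d → ℝ, ‖mderiv u f (combine u x 0)‖
      ≤ ∑ w ∈ uᶜ.powerset, ‖∫ t, (∏ i ∈ w, (1 - (combine u x t) i)) •
          mderiv (u ∪ w) f (combine u x t) ∂cubeM d‖ := by
    intro x
    rw [hcz x, master hf uᶜ u hdisj x]
    refine (norm_sum_le _ _).trans ?_
    refine le_of_eq (Finset.sum_congr rfl fun w hw => ?_)
    rw [norm_smul]
    have hn1 : ‖(-1 : ℝ) ^ w.card‖ = 1 := by
      rw [norm_pow, norm_neg, norm_one, one_pow]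
    rw [hn1, one_mul]
    congr 1
    refine integral_congr_ae (Filter.Eventually.of_forall fun t => ?_)
    simp only
    rw [combine_compl]
    congr 1
    refine Finset.prod_congr rfl fun i hiw => ?_
    have hiw' : i ∉ u := Finset.mem_compl.mp (Finset.mem_powerset.mp hw hiw)
    simp [combine, hiw']
  have hLint : Integrable (fun x => ‖mderiv u f (combine u x 0)‖) (cubeM d) :=
    (integrable_cube (fun x => mderiv u f (combine u x 0))
      ((contDiff_mderiv u hf).continuous.comp (continuous_combine_left u 0))).norm
  have hRWint : ∀ w ∈ uᶜ.powerset,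
      Integrable (fun x => ‖∫ t, (∏ i ∈ w, (1 - (combine u x t) i)) •
        mderiv (u ∪ w) f (combine u x t) ∂cubeM d‖) (cubeM d) := by
    intro w _
    set F : (Fin d → ℝ) → ℂ :=
      fun r => (∏ i ∈ w, (1 - r i)) • mderiv (u ∪ w) f r with hFdef
    have hFc : Continuous F := by
      refine (?_ : Continuous fun r : Fin d → ℝ => ∏ i ∈ w, (1 - r i)).smul (contDiff_mderiv _ hf).continuous
      exact continuous_finset_prod w fun i _ => continuous_const.sub (continuous_apply i)
    exact (integrable_inner_combine u F (integrable_cube F hFc)).norm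
  have hsum := integral_mono hLint (integrable_finset_sum _ hRWint) hpt
  refine hsum.trans ?_
  rw [integral_finset_sum _ hRWint]
  refine Finset.sum_le_sum fun w hw => ?_
  have hdw : Disjoint u w := by
    rw [Finset.disjoint_left]
    intro i hiu hiw
    exact Finset.mem_compl.mp (Finset.mem_powerset.mp hw hiw) hiu
  exact step2 hf u w hdw

end AnchAux


open AnchAux in
/-- `‖f‖_{⊤,d,1} ≤ C_{d,1} ‖f‖_{A,d,1}`. -/
theorem anchored_le_anova_one {d : ℕ} (hd : 1 ≤ d) (γ : Finset (Fin d) → ℝ)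
    (hγ : ∀ u, 0 < γ u) (f : (Fin d → ℝ) → ℂ) (hf : ContDiff ℝ (⊤ : ℕ∞) f) :
    anchNorm1 γ f ≤ Cone γ * anovaNorm1 γ f := by

  classical
  unfold anchNorm1 anovaNorm1 Cone
  simp only [volume_restrict_cube]
  set I : Finset (Fin d) → ℝ :=
    fun v => ∫ x, ‖∫ t, mderiv v f (combine v x t) ∂cubeM d‖ ∂cubeM d with hI
  have hInn : ∀ v, 0 ≤ I v := fun v => integral_nonneg fun x => norm_nonneg _
  have hCone : ∀ v : Finset (Fin d), (∑ z ∈ v.powerset, γ v / γ z)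
      ≤ ⨆ u : Finset (Fin d), ∑ z ∈ u.powerset, γ u / γ z := fun v =>
    le_ciSup (f := fun u : Finset (Fin d) => ∑ z ∈ u.powerset, γ u / γ z)
      (Set.Finite.bddAbove (Set.finite_range _)) v
  calc (∑ u : Finset (Fin d), (γ u)⁻¹ * ∫ x, ‖mderiv u f (combine u x 0)‖ ∂cubeM d)
      ≤ ∑ u : Finset (Fin d), (γ u)⁻¹ * ∑ w ∈ uᶜ.powerset, I (u ∪ w) := by
        refine Finset.sum_le_sum fun u _ => ?_
        exact mul_le_mul_of_nonneg_left (stepU hf u) (inv_nonneg.mpr (hγ u).le)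
    _ = ∑ v : Finset (Fin d), (∑ p ∈ v.powerset, (γ p)⁻¹) * I v := by
        have h1 : (∑ u : Finset (Fin d), (γ u)⁻¹ * ∑ w ∈ uᶜ.powerset, I (u ∪ w))
            = ∑ u : Finset (Fin d), ∑ w ∈ uᶜ.powerset, (γ u)⁻¹ * I (u ∪ w) :=
          Finset.sum_congr rfl fun u _ => Finset.mul_sum _ _ _
        have h2 : (∑ v : Finset (Fin d), (∑ p ∈ v.powerset, (γ p)⁻¹) * I v)
            = ∑ v : Finset (Fin d), ∑ p ∈ v.powerset, (γ p)⁻¹ * I v :=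
          Finset.sum_congr rfl fun v _ => Finset.sum_mul _ _ _
        rw [h1, h2, Finset.sum_sigma', Finset.sum_sigma']
        refine Finset.sum_nbij' (i := fun q => ⟨q.1 ∪ q.2, q.1⟩)
          (j := fun q => ⟨q.2, q.1 \ q.2⟩) ?_ ?_ ?_ ?_ ?_
        · intro q hq
          simp only [Finset.mem_sigma, Finset.mem_univ, Finset.mem_powerset, true_and]
          exact Finset.subset_union_left
        · intro q hq
          simp only [Finset.mem_sigma, Finset.mem_univ, Finset.mem_powerset, true_and] at hq ⊢
          intro i hi
          rw [Finset.mem_compl]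
          exact (Finset.mem_sdiff.mp hi).2
        · rintro ⟨a, b⟩ hq
          simp only [Finset.mem_sigma, Finset.mem_univ, Finset.mem_powerset, true_and] at hq
          have hdisj : Disjoint a b := by
            rw [Finset.disjoint_left]
            intro i hiu hiw
            exact Finset.mem_compl.mp (hq hiw) hiu
          have hkey : (a ∪ b) \ a = b := Finset.union_sdiff_cancel_left hdisj
          simp [hkey]
        · rintro ⟨a, b⟩ hq
          simp only [Finset.mem_sigma, Finset.mem_univ, Finset.mem_powerset, true_and] at hq
          have hkey : b ∪ a \ b = a := Finset.union_sdiff_of_subset hq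
          simp [hkey]
        · intro q hq
          rfl
    _ ≤ ∑ v : Finset (Fin d), ((⨆ u : Finset (Fin d), ∑ z ∈ u.powerset, γ u / γ z)
          * (γ v)⁻¹) * I v := by
        refine Finset.sum_le_sum fun v _ => ?_
        refine mul_le_mul_of_nonneg_right ?_ (hInn v)
        have h1 : (∑ p ∈ v.powerset, (γ p)⁻¹)
            = (γ v)⁻¹ * ∑ z ∈ v.powerset, γ v / γ z := by
          rw [Finset.mul_sum]
          refine Finset.sum_congr rfl fun z _ => ?_
          rw [div_eq_mul_inv, ← mul_assoc, inv_mul_cancel₀ (hγ v).ne', one_mul]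
        rw [h1, mul_comm _ ((γ v)⁻¹)]
        exact mul_le_mul_of_nonneg_left (hCone v) (inv_nonneg.mpr (hγ v).le)
    _ = (⨆ u : Finset (Fin d), ∑ z ∈ u.powerset, γ u / γ z)
          * ∑ v : Finset (Fin d), (γ v)⁻¹ * I v := by
        rw [Finset.mul_sum]
        exact Finset.sum_congr rfl fun v _ => by ring
end

section
/- Let 1 ≤ p < ∞ and let (γ_j)_{j∈ℕ} be strictly positive with τ₀ := sup_{d∈ℕ} (∑_{j=1}^d γ_j)/ln(d+1) < ∞, and consider the product weights γ_u = ∏_{j∈u} γ_j. Then for every τ > (τ₀/2)(1 + 1/p) there exists a constant c > 0 such that for every d ≥ 1 and every C^∞ function f : ℝ^d → ℂ one has ‖f‖_{A,d,p} ≤ c d^τ ‖f‖_{⊤,d,p} and ‖f‖_{⊤,d,p} ≤ c d^τ ‖f‖_{A,d,p}. -/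
open MeasureTheory

/-- `‖f‖_{⊤,d,p}^p`: the `p`-th power of the anchored norm. Since the integrand depends only
on the coordinates in `u` and the cube carries a probability measure, the integral over
`[0,1]^u` is written as an integral over the whole cube. -/
noncomputable def anchP {d : ℕ} (γ : Finset (Fin d) → ℝ) (p : ℝ) (f : (Fin d → ℝ) → ℂ) : ℝ :=
  ∑ u : Finset (Fin d), γ u ^ (-p) * ∫ x in cube d, ‖mderiv u f (combine u x 0)‖ ^ p

/-- `‖f‖_{A,d,p}^p`: the `p`-th power of the ANOVA norm. -/
noncomputable def anovaP {d : ℕ} (γ : Finset (Fin d) → ℝ) (p : ℝ) (f : (Fin d → ℝ) → ℂ) : ℝ :=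
  ∑ u : Finset (Fin d), γ u ^ (-p) *
    ∫ x in cube d, ‖∫ t in cube d, mderiv u f (combine u x t)‖ ^ p

/-- The anchored norm `‖f‖_{⊤,d,p}`. -/
noncomputable def anchNorm {d : ℕ} (γ : Finset (Fin d) → ℝ) (p : ℝ) (f : (Fin d → ℝ) → ℂ) : ℝ :=
  anchP γ p f ^ (1 / p)

/-- The ANOVA norm `‖f‖_{A,d,p}`. -/
noncomputable def anovaNorm {d : ℕ} (γ : Finset (Fin d) → ℝ) (p : ℝ) (f : (Fin d → ℝ) → ℂ) : ℝ :=
  anovaP γ p f ^ (1 / p)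

/-- Product weights `γ_u = ∏_{j∈u} γ_j` built from a sequence `γ : ℕ → ℝ`. -/
noncomputable def prodWeight (γ : ℕ → ℝ) {d : ℕ} (u : Finset (Fin d)) : ℝ :=
  ∏ j ∈ u, γ (j : ℕ)


section Part1
open MeasureTheory Set Function
namespace PolyEquivAux

variable {d : ℕ}

lemma isCompact_cube (d : ℕ) : IsCompact (cube d) :=
  isCompact_univ_pi fun _ => isCompact_Icc

lemma measurableSet_cube (d : ℕ) : MeasurableSet (cube d) :=
  MeasurableSet.univ_pi fun _ => measurableSet_Icc

instance : IsProbabilityMeasure (volume.restrict (Icc (0:ℝ) 1)) :=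
  ⟨by rw [Measure.restrict_apply_univ]; simp [Real.volume_Icc]⟩

lemma restrict_cube_eq_pi (d : ℕ) :
    volume.restrict (cube d) = Measure.pi fun _ : Fin d => volume.restrict (Icc (0:ℝ) 1) := by
  refine (Measure.pi_eq fun s hs => ?_).symm
  rw [Measure.restrict_apply (MeasurableSet.univ_pi hs)]
  have h : univ.pi s ∩ cube d = univ.pi fun i => s i ∩ Icc 0 1 := by
    rw [cube, ← pi_inter_distrib]
  rw [h, volume_pi_pi]
  exact Finset.prod_congr rfl fun i _ => (Measure.restrict_apply (hs i)).symm

instance (d : ℕ) : IsProbabilityMeasure (volume.restrict (cube d)) := by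
  rw [restrict_cube_eq_pi]; infer_instance

lemma map_update_cube (a : Fin d) :
    Measure.map (fun q : (Fin d → ℝ) × ℝ => update q.1 a q.2)
      ((volume.restrict (cube d)).prod (volume.restrict (Icc (0:ℝ) 1)))
      = volume.restrict (cube d) := by
  rw [restrict_cube_eq_pi]
  refine (Measure.pi_eq fun s hs => ?_).symm
  rw [Measure.map_apply (continuous_update a).measurable (MeasurableSet.univ_pi hs)]
  have hpre : (fun q : (Fin d → ℝ) × ℝ => update q.1 a q.2) ⁻¹' univ.pi s
      = (univ.pi (update s a univ)) ×ˢ s a := by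
    ext ⟨x, r⟩
    simp only [mem_preimage, mem_pi, mem_univ, true_implies, mem_prod]
    constructor
    · intro h
      refine ⟨fun i => ?_, by simpa using h a⟩
      rcases eq_or_ne i a with rfl | hi
      · simp
      · have := h i
        simp only [update_of_ne hi] at this ⊢
        exact this
    · rintro ⟨h1, h2⟩ i
      rcases eq_or_ne i a with rfl | hi
      · simpa using h2
      · have := h1 i
        simp only [update_of_ne hi] at this ⊢
        exact this
  rw [hpre, Measure.prod_prod, Measure.pi_pi]
  have h2 : ∀ i, (volume.restrict (Icc (0:ℝ) 1)) (update s a univ i)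
      = update (fun i => (volume.restrict (Icc (0:ℝ) 1)) (s i)) a 1 i := by
    intro i; rcases eq_or_ne i a with rfl | hi
    · simp
    · simp [update_of_ne hi]
  rw [Finset.prod_congr rfl fun i _ => h2 i, Finset.prod_update_of_mem (Finset.mem_univ a),
    one_mul, Finset.sdiff_singleton_eq_erase, mul_comm]
  exact Finset.mul_prod_erase Finset.univ (fun i => (volume.restrict (Icc (0:ℝ) 1)) (s i)) (Finset.mem_univ a)

lemma integrable_on_cube {E : Type*} [NormedAddCommGroup E] {F : (Fin d → ℝ) → E}
    (hF : Continuous F) : Integrable F (volume.restrict (cube d)) :=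
  hF.continuousOn.integrableOn_compact (isCompact_cube d)

lemma integral_update_cube {E : Type*} [NormedAddCommGroup E] [NormedSpace ℝ E]
    (a : Fin d) {F : (Fin d → ℝ) → E} (hF : Continuous F) :
    ∫ x in cube d, F x = ∫ x in cube d, ∫ s in Icc (0:ℝ) 1, F (update x a s) := by
  conv_lhs => rw [← map_update_cube a]
  rw [integral_map (continuous_update a).measurable.aemeasurable hF.aestronglyMeasurable]
  exact integral_prod _ (by
    rw [Measure.prod_restrict, ← Measure.volume_eq_prod]
    exact (hF.comp (continuous_update a)).continuousOn.integrableOn_compact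
      ((isCompact_cube d).prod isCompact_Icc))

end PolyEquivAux

end Part1
section Part2
open MeasureTheory Set Function

namespace PolyEquivAux

variable {d : ℕ}

/-- Continuity of a parametrized integral against a measure supported on a compact set. -/
lemma continuous_param_integral {X : Type*} [MetricSpace X] [ProperSpace X]
    {Y E : Type*} [MeasurableSpace Y] [TopologicalSpace Y] [OpensMeasurableSpace Y]
    [NormedAddCommGroup E] [SecondCountableTopology E]
    [NormedSpace ℝ E] {μ : Measure Y} [IsFiniteMeasure μ] {K : Set Y} (hKc : IsCompact K)
    (hμK : μ Kᶜ = 0) {F : X → Y → E} (hF : Continuous (uncurry F)) :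
    Continuous fun x => ∫ y, F x y ∂μ := by
  rw [continuous_iff_continuousAt]
  intro x₀
  obtain ⟨C, hC⟩ := ((isCompact_closedBall x₀ 1).prod hKc).exists_bound_of_continuousOn
    hF.continuousOn
  apply continuousAt_of_dominated (bound := fun _ => |C|)
  · exact Filter.Eventually.of_forall fun x =>
      (hF.comp (Continuous.prodMk_right x)).aestronglyMeasurable
  · filter_upwards [Metric.closedBall_mem_nhds x₀ one_pos] with x hx
    refine ae_iff.mpr (measure_mono_null ?_ hμK)
    intro y hy
    simp only [mem_compl_iff]
    intro hyK
    exact hy ((hC (x, y) ⟨hx, hyK⟩).trans (le_abs_self C))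
  · exact integrable_const _
  · exact Filter.Eventually.of_forall fun y =>
      (hF.comp (continuous_id.prodMk continuous_const)).continuousAt

lemma restrict_compl_cube (d : ℕ) : (volume.restrict (cube d)) (cube d)ᶜ = 0 := by
  rw [Measure.restrict_apply (measurableSet_cube d).compl]
  simp

lemma restrict_compl_Icc : (volume.restrict (Icc (0:ℝ) 1)) (Icc (0:ℝ) 1)ᶜ = 0 := by
  rw [Measure.restrict_apply measurableSet_Icc.compl]
  simp

/-- smoothness of partial derivatives -/
lemma pderiv_def {f : (Fin d → ℝ) → ℂ} (j : Fin d) :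
    pderiv j f = fun x => fderiv ℝ f x (Pi.single j 1) := rfl

lemma contDiff_pderiv {f : (Fin d → ℝ) → ℂ} (j : Fin d) (hf : ContDiff ℝ (⊤ : ℕ∞) f) :
    ContDiff ℝ (⊤ : ℕ∞) (pderiv j f) := by
  have h := (ContinuousLinearMap.apply ℝ ℂ (Pi.single j (1:ℝ))).contDiff.comp
    (hf.fderiv_right (m := ((⊤ : ℕ∞) : WithTop ℕ∞)) (by simp))
  simpa only [pderiv_def, Function.comp_def, ContinuousLinearMap.apply_apply] using h

lemma contDiff_foldr {f : (Fin d → ℝ) → ℂ} (l : List (Fin d)) (hf : ContDiff ℝ (⊤ : ℕ∞) f) :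
    ContDiff ℝ (⊤ : ℕ∞) (l.foldr pderiv f) := by
  induction l with
  | nil => exact hf
  | cons j l ih => exact contDiff_pderiv j ih

lemma contDiff_mderiv {f : (Fin d → ℝ) → ℂ} (u : Finset (Fin d)) (hf : ContDiff ℝ (⊤ : ℕ∞) f) :
    ContDiff ℝ (⊤ : ℕ∞) (mderiv u f) := contDiff_foldr _ hf

lemma pderiv_comm {f : (Fin d → ℝ) → ℂ} (hf : ContDiff ℝ (⊤ : ℕ∞) f) (i j : Fin d) :
    pderiv i (pderiv j f) = pderiv j (pderiv i f) := by
  have hdf : Differentiable ℝ f := hf.differentiable (by simp)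
  have h1 : ContDiff ℝ (⊤ : ℕ∞) (fderiv ℝ f) := hf.fderiv_right (by simp)
  have hdf' : Differentiable ℝ (fderiv ℝ f) := h1.differentiable (by simp)
  funext x
  have key := second_derivative_symmetric (f' := fderiv ℝ f)
    (fun y => (hdf y).hasFDerivAt) (hdf' x).hasFDerivAt
  have e : ∀ v w : Fin d → ℝ,
      fderiv ℝ (fun y => fderiv ℝ f y w) x v = fderiv ℝ (fderiv ℝ f) x v w := by
    intro v w
    have h2 : HasFDerivAt (fun y => fderiv ℝ f y w)
        ((ContinuousLinearMap.apply ℝ ℂ w).comp (fderiv ℝ (fderiv ℝ f) x)) x :=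
      (ContinuousLinearMap.apply ℝ ℂ w).hasFDerivAt.comp x (hdf' x).hasFDerivAt
    rw [h2.fderiv]; rfl
  simp only [pderiv_def]
  rw [e, e, key]

lemma foldr_pderiv_perm {f : (Fin d → ℝ) → ℂ} (hf : ContDiff ℝ (⊤ : ℕ∞) f)
    {l₁ l₂ : List (Fin d)} (h : l₁.Perm l₂) :
    l₁.foldr pderiv f = l₂.foldr pderiv f := by
  induction h with
  | nil => rfl
  | cons x h ih => simp only [List.foldr_cons, ih]
  | swap x y l => exact pderiv_comm (contDiff_foldr l hf) y x
  | trans h₁ h₂ ih₁ ih₂ => rw [ih₁, ih₂]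

lemma mderiv_insert {f : (Fin d → ℝ) → ℂ} (hf : ContDiff ℝ (⊤ : ℕ∞) f)
    {u : Finset (Fin d)} {a : Fin d} (ha : a ∉ u) :
    mderiv (insert a u) f = pderiv a (mderiv u f) := by
  unfold mderiv
  rw [foldr_pderiv_perm hf (Finset.toList_insert ha)]
  rfl

lemma hasDerivAt_comp_update {h : (Fin d → ℝ) → ℂ} (hh : ContDiff ℝ (⊤ : ℕ∞) h)
    (y : Fin d → ℝ) (a : Fin d) (s : ℝ) :
    HasDerivAt (fun r => h (update y a r)) (pderiv a h (update y a s)) s := by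
  have h1 : HasFDerivAt h (fderiv ℝ h (update y a s)) (update y a s) :=
    (hh.differentiable (by simp) _).hasFDerivAt
  simpa [pderiv, Function.comp_def] using h1.comp_hasDerivAt s (hasDerivAt_update y a s)

/-- the 1D integration by parts identity -/
lemma integral01_parts {g dg : ℝ → ℂ} (hg : ∀ s, HasDerivAt g (dg s) s)
    (hdg : Continuous dg) :
    ∫ s in Icc (0:ℝ) 1, g s = g 0 + ∫ s in Icc (0:ℝ) 1, (1 - (s:ℂ)) * dg s := by
  have hgc : Continuous g := continuous_iff_continuousAt.mpr fun s => (hg s).continuousAt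
  have hI : ∀ F : ℝ → ℂ, ∫ s in Icc (0:ℝ) 1, F s = ∫ s in (0:ℝ)..1, F s := fun F => by
    rw [intervalIntegral.integral_of_le zero_le_one, integral_Icc_eq_integral_Ioc]
  have hu : ∀ s ∈ uIcc (0:ℝ) 1, HasDerivAt (fun r : ℝ => (r:ℂ) - 1) 1 s := by
    intro s _
    simpa using (Complex.ofRealCLM.hasDerivAt (x := s)).sub_const 1
  have parts := intervalIntegral.integral_deriv_mul_eq_sub (u := fun r : ℝ => (r:ℂ) - 1)
    (v := g) (u' := fun _ => 1) (v' := dg) hu (fun s _ => hg s)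
    intervalIntegrable_const (hdg.intervalIntegrable 0 1)
  simp only [one_mul] at parts
  have hint1 : IntervalIntegrable g volume 0 1 := hgc.intervalIntegrable 0 1
  have hint2 : IntervalIntegrable (fun s : ℝ => ((s:ℂ) - 1) * dg s) volume 0 1 :=
    (((Complex.continuous_ofReal.sub continuous_const)).mul hdg).intervalIntegrable 0 1
  rw [intervalIntegral.integral_add hint1 hint2] at parts
  have h2 : ∫ s in (0:ℝ)..1, (1 - (s:ℂ)) * dg s
      = - ∫ s in (0:ℝ)..1, ((s:ℂ) - 1) * dg s := by
    rw [← intervalIntegral.integral_neg]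
    congr 1; funext s; ring
  rw [hI, hI, h2]
  simp only [Complex.ofReal_one, Complex.ofReal_zero] at parts
  linear_combination parts

end PolyEquivAux
end Part2

section Part3
open MeasureTheory Set Function

namespace PolyEquivAux

variable {d : ℕ}

lemma memLp_of_continuous_Icc {q : ENNReal} {F : ℝ → ℝ} (hF : Continuous F) :
    MemLp F q (volume.restrict (Icc (0:ℝ) 1)) := by
  obtain ⟨C, hC⟩ := isCompact_Icc.exists_bound_of_continuousOn
    (hF.continuousOn (s := Icc (0:ℝ) 1))
  refine MemLp.of_bound hF.aestronglyMeasurable C ?_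
  filter_upwards [ae_restrict_mem measurableSet_Icc] with s hs using hC s hs

lemma memLp_of_continuous_cube {q : ENNReal} {F : (Fin d → ℝ) → ℂ} (hF : Continuous F) :
    MemLp F q (volume.restrict (cube d)) := by
  obtain ⟨C, hC⟩ := (isCompact_cube d).exists_bound_of_continuousOn
    (hF.continuousOn (s := cube d))
  refine MemLp.of_bound hF.aestronglyMeasurable C ?_
  filter_upwards [ae_restrict_mem (measurableSet_cube d)] with s hs using hC s hs

lemma weight_integral_half : ∫ s in Icc (0:ℝ) 1, |1 - s| = 1/2 := by
  have h : EqOn (fun s : ℝ => |1 - s|) (fun s : ℝ => 1 - s) (Icc (0:ℝ) 1) := by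
    intro s hs
    exact abs_of_nonneg (by linarith [hs.2])
  rw [setIntegral_congr_fun measurableSet_Icc h, integral_Icc_eq_integral_Ioc,
    ← intervalIntegral.integral_of_le zero_le_one,
    intervalIntegral.integral_sub intervalIntegrable_const intervalIntegral.intervalIntegrable_id]
  simp [integral_id]
  norm_num

lemma holder_one_dim {p : ℝ} (hp : 1 ≤ p) {h : ℝ → ℂ} (hh : Continuous h) :
    ‖∫ s in Icc (0:ℝ) 1, (1 - (s:ℂ)) * h s‖ ^ p
      ≤ (2:ℝ) ^ (1 - p) * ∫ s in Icc (0:ℝ) 1, ‖h s‖ ^ p := by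
  have hp0 : 0 < p := lt_of_lt_of_le one_pos hp
  have hw : ∀ s : ℝ, ‖(1 - (s:ℂ)) * h s‖ = |1 - s| * ‖h s‖ := by
    intro s
    rw [norm_mul]
    congr 1
    rw [show (1 - (s:ℂ)) = ((1 - s : ℝ) : ℂ) by push_cast; ring, Complex.norm_real,
      Real.norm_eq_abs]
  have hInn : 0 ≤ ∫ s in Icc (0:ℝ) 1, ‖h s‖ ^ p :=
    integral_nonneg fun s => Real.rpow_nonneg (norm_nonneg _) p
  have hInt_hp : IntegrableOn (fun s => ‖h s‖ ^ p) (Icc (0:ℝ) 1) volume :=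
    ((hh.norm.rpow_const fun s => Or.inr hp0.le).continuousOn).integrableOn_compact isCompact_Icc
  have hnorm : ‖∫ s in Icc (0:ℝ) 1, (1 - (s:ℂ)) * h s‖
      ≤ ∫ s in Icc (0:ℝ) 1, |1 - s| * ‖h s‖ :=
    (norm_integral_le_integral_norm _).trans_eq
      (integral_congr_ae (Filter.Eventually.of_forall hw))
  rcases eq_or_lt_of_le hp with hp1 | hp1
  · -- p = 1
    rw [← hp1]
    simp only [Real.rpow_one, sub_self, Real.rpow_zero, one_mul]
    refine hnorm.trans (integral_mono_ae ?_ ?_ ?_)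
    · exact ((continuous_const.sub continuous_id).abs.mul hh.norm).continuousOn.integrableOn_compact
        isCompact_Icc
    · exact hh.norm.continuousOn.integrableOn_compact isCompact_Icc
    · filter_upwards [ae_restrict_mem measurableSet_Icc] with s hs
      have h1 : |1 - s| ≤ 1 := by
        rw [abs_of_nonneg (by linarith [hs.2])]
        linarith [hs.1]
      calc |1 - s| * ‖h s‖ ≤ 1 * ‖h s‖ :=
            mul_le_mul_of_nonneg_right h1 (norm_nonneg _)
        _ = ‖h s‖ := one_mul _
  · -- 1 < p
    have hpq : p.HolderConjugate (p / (p - 1)) := Real.HolderConjugate.conjExponent hp1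
    set q : ℝ := p / (p - 1) with hqdef
    have hq0 : 0 < q := hpq.symm.pos
    have hf0 : (0:ℝ → ℝ) ≤ᵐ[volume.restrict (Icc (0:ℝ) 1)]
        fun s => |1 - s| ^ (1/p) * ‖h s‖ :=
      Filter.Eventually.of_forall fun s => by positivity
    have hg0 : (0:ℝ → ℝ) ≤ᵐ[volume.restrict (Icc (0:ℝ) 1)] fun s => |1 - s| ^ (1/q) :=
      Filter.Eventually.of_forall fun s => by positivity
    have hfc : Continuous fun s : ℝ => |1 - s| ^ (1/p) * ‖h s‖ :=
      ((continuous_const.sub continuous_id).abs.rpow_const fun s => Or.inr (by positivity)).mul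
        hh.norm
    have hgc : Continuous fun s : ℝ => |1 - s| ^ (1/q) :=
      (continuous_const.sub continuous_id).abs.rpow_const fun s => Or.inr (by positivity)
    have holder := integral_mul_le_Lp_mul_Lq_of_nonneg hpq hf0 hg0
      (memLp_of_continuous_Icc hfc) (memLp_of_continuous_Icc hgc)
    -- rewrite the three integrals
    have e1 : ∫ s in Icc (0:ℝ) 1, (|1 - s| ^ (1/p) * ‖h s‖) * |1 - s| ^ (1/q)
        = ∫ s in Icc (0:ℝ) 1, |1 - s| * ‖h s‖ := by
      refine integral_congr_ae (Filter.Eventually.of_forall fun s => ?_)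
      have hsum : 1/p + 1/q = 1 := by
        rw [one_div, one_div]
        exact hpq.inv_add_inv_eq_one
      have : |1 - s| ^ (1/p) * |1 - s| ^ (1/q) = |1 - s| := by
        rw [← Real.rpow_add' (abs_nonneg _) (by rw [hsum]; norm_num), hsum, Real.rpow_one]
      calc (|1 - s| ^ (1/p) * ‖h s‖) * |1 - s| ^ (1/q)
          = (|1 - s| ^ (1/p) * |1 - s| ^ (1/q)) * ‖h s‖ := by ring
        _ = |1 - s| * ‖h s‖ := by rw [this]
    have e2 : ∫ s in Icc (0:ℝ) 1, (|1 - s| ^ (1/p) * ‖h s‖) ^ p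
        = ∫ s in Icc (0:ℝ) 1, |1 - s| * ‖h s‖ ^ p := by
      refine integral_congr_ae (Filter.Eventually.of_forall fun s => ?_)
      dsimp only
      rw [Real.mul_rpow (by positivity) (norm_nonneg _), ← Real.rpow_mul (abs_nonneg _),
        one_div_mul_cancel hp0.ne', Real.rpow_one]
    have e3 : ∫ s in Icc (0:ℝ) 1, (|1 - s| ^ (1/q)) ^ q = 1/2 := by
      rw [← weight_integral_half]
      refine integral_congr_ae (Filter.Eventually.of_forall fun s => ?_)
      dsimp only
      rw [← Real.rpow_mul (abs_nonneg _), one_div_mul_cancel hq0.ne', Real.rpow_one]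
    rw [e1, e2, e3] at holder
    -- ∫ |1-s| ‖h‖^p ≤ ∫ ‖h‖^p
    have e4 : ∫ s in Icc (0:ℝ) 1, |1 - s| * ‖h s‖ ^ p ≤ ∫ s in Icc (0:ℝ) 1, ‖h s‖ ^ p := by
      refine integral_mono_ae ?_ hInt_hp ?_
      · exact ((continuous_const.sub continuous_id).abs.mul
          (hh.norm.rpow_const fun s => Or.inr hp0.le)).continuousOn.integrableOn_compact
          isCompact_Icc
      · filter_upwards [ae_restrict_mem measurableSet_Icc] with s hs
        have h1 : |1 - s| ≤ 1 := by
          rw [abs_of_nonneg (by linarith [hs.2])]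
          linarith [hs.1]
        calc |1 - s| * ‖h s‖ ^ p ≤ 1 * ‖h s‖ ^ p :=
              mul_le_mul_of_nonneg_right h1 (Real.rpow_nonneg (norm_nonneg _) p)
          _ = ‖h s‖ ^ p := one_mul _
    have hw1 : 0 ≤ ∫ s in Icc (0:ℝ) 1, |1 - s| * ‖h s‖ ^ p :=
      integral_nonneg fun s => by positivity
    have step : ‖∫ s in Icc (0:ℝ) 1, (1 - (s:ℂ)) * h s‖
        ≤ (∫ s in Icc (0:ℝ) 1, ‖h s‖ ^ p) ^ (1/p) * (1/2:ℝ) ^ (1/q) := by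
      refine hnorm.trans (holder.trans ?_)
      exact mul_le_mul_of_nonneg_right
        (Real.rpow_le_rpow hw1 e4 (by positivity)) (Real.rpow_nonneg (by norm_num) _)
    calc ‖∫ s in Icc (0:ℝ) 1, (1 - (s:ℂ)) * h s‖ ^ p
        ≤ ((∫ s in Icc (0:ℝ) 1, ‖h s‖ ^ p) ^ (1/p) * (1/2:ℝ) ^ (1/q)) ^ p :=
          Real.rpow_le_rpow (norm_nonneg _) step hp0.le
      _ = (∫ s in Icc (0:ℝ) 1, ‖h s‖ ^ p) * ((1/2:ℝ) ^ (1/q)) ^ p := by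
          rw [Real.mul_rpow (Real.rpow_nonneg hInn _) (Real.rpow_nonneg (by norm_num) _),
            ← Real.rpow_mul hInn, one_div_mul_cancel hp0.ne', Real.rpow_one]
      _ = (2:ℝ) ^ (1 - p) * ∫ s in Icc (0:ℝ) 1, ‖h s‖ ^ p := by
          rw [← Real.rpow_mul (by norm_num : (0:ℝ) ≤ 1/2)]
          have hqp : (1/q) * p = p - 1 := by
            rw [hqdef]
            field_simp
          rw [hqp, mul_comm]
          congr 1
          rw [one_div, Real.inv_rpow (by norm_num : (0:ℝ) ≤ 2), ← Real.rpow_neg (by norm_num),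
            neg_sub]

lemma Lp_triangle_cube {p : ℝ} (hp : 1 ≤ p) {g h : (Fin d → ℝ) → ℂ}
    (hg : Continuous g) (hh : Continuous h) :
    (∫ x in cube d, ‖g x + h x‖ ^ p) ^ (1/p)
      ≤ (∫ x in cube d, ‖g x‖ ^ p) ^ (1/p) + (∫ x in cube d, ‖h x‖ ^ p) ^ (1/p) := by
  have hp0 : 0 < p := lt_of_lt_of_le one_pos hp
  have hpne0 : (ENNReal.ofReal p) ≠ 0 := by
    simp only [ne_eq, ENNReal.ofReal_eq_zero, not_le]
    exact hp0
  have hpnetop : (ENNReal.ofReal p) ≠ ⊤ := ENNReal.ofReal_ne_top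
  have htriangle := eLpNorm_add_le (μ := volume.restrict (cube d))
    hg.aestronglyMeasurable hh.aestronglyMeasurable
    (p := ENNReal.ofReal p) (by simpa using ENNReal.ofReal_le_ofReal hp)
  have e0 : (ENNReal.ofReal p).toReal = p := ENNReal.toReal_ofReal hp0.le
  have eg := (memLp_of_continuous_cube (q := ENNReal.ofReal p) hg).eLpNorm_eq_integral_rpow_norm
    hpne0 hpnetop
  have eh := (memLp_of_continuous_cube (q := ENNReal.ofReal p) hh).eLpNorm_eq_integral_rpow_norm
    hpne0 hpnetop
  have egh := (memLp_of_continuous_cube (q := ENNReal.ofReal p) (hg.add hh)).eLpNorm_eq_integral_rpow_norm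
    hpne0 hpnetop
  have hgh : (g + h) = fun x => g x + h x := rfl
  simp only [hgh] at egh htriangle
  rw [eg, eh, egh, e0] at htriangle
  have hB : (0:ℝ) ≤ (∫ x in cube d, ‖g x‖ ^ p) ^ p⁻¹ :=
    Real.rpow_nonneg (integral_nonneg fun x => Real.rpow_nonneg (norm_nonneg _) p) _
  have hC : (0:ℝ) ≤ (∫ x in cube d, ‖h x‖ ^ p) ^ p⁻¹ :=
    Real.rpow_nonneg (integral_nonneg fun x => Real.rpow_nonneg (norm_nonneg _) p) _
  rw [← ENNReal.ofReal_add hB hC] at htriangle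
  have := (ENNReal.ofReal_le_ofReal_iff (by positivity)).mp htriangle
  simpa only [one_div] using this

end PolyEquivAux
end Part3

section Part4
open MeasureTheory Set Function

namespace PolyEquivAux

variable {d : ℕ}

/-- the point with coordinates in `u` from `x`, coordinates in `A \ u` from `t`, zero elsewhere -/
def pt (u A : Finset (Fin d)) (x t : Fin d → ℝ) : Fin d → ℝ :=
  fun j => if j ∈ u then x j else if j ∈ A then t j else 0

lemma continuous_pt (u A : Finset (Fin d)) :
    Continuous fun q : (Fin d → ℝ) × (Fin d → ℝ) => pt u A q.1 q.2 := by
  refine continuous_pi fun j => ?_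
  show Continuous fun q : (Fin d → ℝ) × (Fin d → ℝ) =>
    if j ∈ u then q.1 j else if j ∈ A then q.2 j else 0
  by_cases h1 : j ∈ u
  · simp only [h1, if_true]
    exact (continuous_apply j).comp continuous_fst
  · by_cases h2 : j ∈ A
    · simp only [h1, h2, if_false, if_true]
      exact (continuous_apply j).comp continuous_snd
    · simp only [h1, h2, if_false]
      exact continuous_const

lemma continuous_update_right (y : Fin d → ℝ) (a : Fin d) :
    Continuous fun s : ℝ => update y a s :=
  (continuous_update (A := fun _ : Fin d => ℝ) a).comp (continuous_const.prodMk continuous_id)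

lemma continuous_pt_right (u A : Finset (Fin d)) (x : Fin d → ℝ) :
    Continuous fun t => pt u A x t :=
  (continuous_pt u A).comp (continuous_const.prodMk continuous_id)

noncomputable def GG (f : (Fin d → ℝ) → ℂ) (u A : Finset (Fin d)) (x : Fin d → ℝ) : ℂ :=
  ∫ t in cube d, mderiv u f (pt u A x t)

lemma GG_def (f : (Fin d → ℝ) → ℂ) (u A : Finset (Fin d)) (x : Fin d → ℝ) :
    GG f u A x = ∫ t in cube d, mderiv u f (pt u A x t) := rfl

lemma continuous_GG {f : (Fin d → ℝ) → ℂ} (hf : ContDiff ℝ (⊤ : ℕ∞) f) (u A : Finset (Fin d)) :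
    Continuous (GG f u A) := by
  apply continuous_param_integral (isCompact_cube d) (restrict_compl_cube d)
  exact (contDiff_mderiv u hf).continuous.comp (continuous_pt u A)

noncomputable def PP (f : (Fin d → ℝ) → ℂ) (p : ℝ) (u A : Finset (Fin d)) : ℝ :=
  ∫ x in cube d, ‖GG f u A x‖ ^ p

lemma PP_nonneg (f : (Fin d → ℝ) → ℂ) (p : ℝ) (u A : Finset (Fin d)) : 0 ≤ PP f p u A :=
  integral_nonneg fun x => Real.rpow_nonneg (norm_nonneg _) p

variable {u A : Finset (Fin d)} {a : Fin d} {x t : Fin d → ℝ} {s : ℝ}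

lemma pt_insert_of_mem (h : a ∈ u) : pt u (insert a A) x t = pt u A x t := by
  funext j
  by_cases h1 : j ∈ u
  · simp [pt, h1]
  · have hj : j ≠ a := fun e => h1 (e ▸ h)
    simp [pt, h1, Finset.mem_insert, hj]

lemma pt_update_eq (hau : a ∉ u) :
    pt u (insert a A) x (update t a s) = update (pt u A x t) a s := by
  funext j
  rcases eq_or_ne j a with rfl | hj
  · simp [pt, hau]
  · by_cases h1 : j ∈ u
    · simp [pt, h1, update_of_ne hj]
    · by_cases h2 : j ∈ A
      · simp [pt, h1, h2, Finset.mem_insert, hj, update_of_ne hj]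
      · simp [pt, h1, h2, Finset.mem_insert, hj, update_of_ne hj]

lemma update_pt_eq (hau : a ∉ u) (haA : a ∉ A) :
    update (pt u A x t) a s = pt (insert a u) A (update x a s) t := by
  funext j
  rcases eq_or_ne j a with rfl | hj
  · simp [pt, Finset.mem_insert, haA]
  · by_cases h1 : j ∈ u
    · simp [pt, h1, Finset.mem_insert, hj, update_of_ne hj]
    · by_cases h2 : j ∈ A
      · simp [pt, h1, h2, Finset.mem_insert, hj, update_of_ne hj]
      · simp [pt, h1, h2, Finset.mem_insert, hj, update_of_ne hj]

lemma pt_a_eq_zero (hau : a ∉ u) (haA : a ∉ A) : pt u A x t a = 0 := by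
  simp [pt, hau, haA]

lemma GG_insert_of_mem (f : (Fin d → ℝ) → ℂ) (h : a ∈ u) :
    GG f u (insert a A) = GG f u A := by
  funext x
  rw [GG_def, GG_def]
  exact integral_congr_ae (Filter.Eventually.of_forall fun t => by
    dsimp only
    rw [pt_insert_of_mem h])

lemma PP_insert_of_mem (f : (Fin d → ℝ) → ℂ) (p : ℝ) (h : a ∈ u) :
    PP f p u (insert a A) = PP f p u A := by
  unfold PP
  rw [GG_insert_of_mem f h]

/-- The key identity relating anchoring and averaging in coordinate `a`. -/
lemma GG_insert {f : (Fin d → ℝ) → ℂ} (hf : ContDiff ℝ (⊤ : ℕ∞) f)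
    (hau : a ∉ u) (haA : a ∉ A) (x : Fin d → ℝ) :
    GG f u (insert a A) x = GG f u A x
      + ∫ s in Icc (0:ℝ) 1, (1 - (s:ℂ)) * GG f (insert a u) A (update x a s) := by
  have hm : Continuous (mderiv u f) := (contDiff_mderiv u hf).continuous
  have hv : Continuous (mderiv (insert a u) f) := (contDiff_mderiv _ hf).continuous
  have h1 : GG f u (insert a A) x
      = ∫ t in cube d, ∫ s in Icc (0:ℝ) 1, mderiv u f (update (pt u A x t) a s) := by
    rw [GG_def,
      integral_update_cube a (F := fun t => mderiv u f (pt u (insert a A) x t))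
        (hm.comp (continuous_pt_right u (insert a A) x))]
    refine integral_congr_ae (Filter.Eventually.of_forall fun t => ?_)
    refine integral_congr_ae (Filter.Eventually.of_forall fun s => ?_)
    dsimp only
    rw [pt_update_eq hau]
  have h2 : ∀ t : Fin d → ℝ, (∫ s in Icc (0:ℝ) 1, mderiv u f (update (pt u A x t) a s))
      = mderiv u f (pt u A x t)
        + ∫ s in Icc (0:ℝ) 1, (1 - (s:ℂ)) * mderiv (insert a u) f (update (pt u A x t) a s) := by
    intro t
    have hder : ∀ s : ℝ, HasDerivAt (fun r => mderiv u f (update (pt u A x t) a r))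
        (mderiv (insert a u) f (update (pt u A x t) a s)) s := by
      intro s
      rw [mderiv_insert hf hau]
      exact hasDerivAt_comp_update (contDiff_mderiv u hf) _ a s
    have hcont : Continuous fun s : ℝ => mderiv (insert a u) f (update (pt u A x t) a s) :=
      hv.comp (continuous_update_right (pt u A x t) a)
    have h0 : update (pt u A x t) a 0 = pt u A x t := by
      have hz : pt u A x t a = 0 := pt_a_eq_zero hau haA
      conv_lhs => rw [← hz]
      exact update_eq_self a _
    rw [integral01_parts hder hcont, h0]
  have hB : Continuous fun t => mderiv u f (pt u A x t) :=
    hm.comp (continuous_pt_right u A x)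
  have hjoint : Continuous fun q : (Fin d → ℝ) × ℝ =>
      (1 - (q.2:ℂ)) * mderiv (insert a u) f (update (pt u A x q.1) a q.2) := by
    apply Continuous.mul
    · exact continuous_const.sub (Complex.continuous_ofReal.comp continuous_snd)
    · exact hv.comp ((continuous_update a).comp
        (((continuous_pt_right u A x).comp continuous_fst).prodMk continuous_snd))
  have hW : Continuous fun t => ∫ s in Icc (0:ℝ) 1,
      (1 - (s:ℂ)) * mderiv (insert a u) f (update (pt u A x t) a s) :=
    continuous_param_integral isCompact_Icc restrict_compl_Icc hjoint
  have hsplit : GG f u (insert a A) x = GG f u A x + ∫ t in cube d, ∫ s in Icc (0:ℝ) 1,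
      (1 - (s:ℂ)) * mderiv (insert a u) f (update (pt u A x t) a s) := by
    rw [h1]
    rw [integral_congr_ae (Filter.Eventually.of_forall fun t => h2 t)]
    rw [integral_add (integrable_on_cube hB) (integrable_on_cube hW)]
    rfl
  rw [hsplit]
  congr 1
  rw [integral_integral_swap (by
    rw [Measure.prod_restrict, ← Measure.volume_eq_prod]
    exact hjoint.continuousOn.integrableOn_compact ((isCompact_cube d).prod isCompact_Icc))]
  refine integral_congr_ae (Filter.Eventually.of_forall fun s => ?_)
  dsimp only
  rw [integral_const_mul]
  congr 1
  rw [GG_def]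
  refine integral_congr_ae (Filter.Eventually.of_forall fun t => ?_)
  dsimp only
  rw [update_pt_eq hau haA]

lemma correction_bound {f : (Fin d → ℝ) → ℂ} (hf : ContDiff ℝ (⊤ : ℕ∞) f) {p : ℝ} (hp : 1 ≤ p)
    (v A : Finset (Fin d)) (a : Fin d) :
    ∫ x in cube d, ‖∫ s in Icc (0:ℝ) 1, (1 - (s:ℂ)) * GG f v A (update x a s)‖ ^ p
      ≤ (2:ℝ) ^ (1 - p) * PP f p v A := by
  have hp0 : 0 < p := lt_of_lt_of_le one_pos hp
  have hG : Continuous (GG f v A) := continuous_GG hf v A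
  have hjoint : Continuous fun q : (Fin d → ℝ) × ℝ =>
      (1 - (q.2:ℂ)) * GG f v A (update q.1 a q.2) :=
    (continuous_const.sub (Complex.continuous_ofReal.comp continuous_snd)).mul
      (hG.comp (continuous_update a))
  have hC : Continuous fun x => ∫ s in Icc (0:ℝ) 1, (1 - (s:ℂ)) * GG f v A (update x a s) :=
    continuous_param_integral isCompact_Icc restrict_compl_Icc hjoint
  have hjoint2 : Continuous fun q : (Fin d → ℝ) × ℝ => ‖GG f v A (update q.1 a q.2)‖ ^ p :=
    ((hG.comp (continuous_update a)).norm).rpow_const fun q => Or.inr hp0.le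
  have hR : Continuous fun x => ∫ s in Icc (0:ℝ) 1, ‖GG f v A (update x a s)‖ ^ p :=
    continuous_param_integral isCompact_Icc restrict_compl_Icc hjoint2
  have hmono : ∫ x in cube d, ‖∫ s in Icc (0:ℝ) 1, (1 - (s:ℂ)) * GG f v A (update x a s)‖ ^ p
      ≤ ∫ x in cube d, (2:ℝ) ^ (1 - p) * ∫ s in Icc (0:ℝ) 1, ‖GG f v A (update x a s)‖ ^ p := by
    refine integral_mono ?_ ?_ ?_
    · exact integrable_on_cube ((hC.norm).rpow_const fun x => Or.inr hp0.le)
    · exact integrable_on_cube (continuous_const.mul hR)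
    · intro x
      dsimp only
      exact holder_one_dim hp (hG.comp (continuous_update_right x a))
  refine hmono.trans_eq ?_
  rw [integral_const_mul]
  congr 1
  exact (integral_update_cube a (F := fun x => ‖GG f v A x‖ ^ p)
    ((hG.norm).rpow_const fun x => Or.inr hp0.le)).symm

lemma PP_step {f : (Fin d → ℝ) → ℂ} (hf : ContDiff ℝ (⊤ : ℕ∞) f) {p : ℝ} (hp : 1 ≤ p)
    (hau : a ∉ u) (haA : a ∉ A) :
    PP f p u (insert a A) ^ (1/p) ≤ PP f p u A ^ (1/p)
      + ((2:ℝ) ^ (1 - p)) ^ (1/p) * PP f p (insert a u) A ^ (1/p) := by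
  have hp0 : 0 < p := lt_of_lt_of_le one_pos hp
  have hG : Continuous (GG f u A) := continuous_GG hf u A
  have hGv : Continuous (GG f (insert a u) A) := continuous_GG hf _ A
  have hC : Continuous fun x => ∫ s in Icc (0:ℝ) 1,
      (1 - (s:ℂ)) * GG f (insert a u) A (update x a s) :=
    continuous_param_integral isCompact_Icc restrict_compl_Icc
      ((continuous_const.sub (Complex.continuous_ofReal.comp continuous_snd)).mul
        (hGv.comp (continuous_update a)))
  have he : PP f p u (insert a A) = ∫ x in cube d, ‖GG f u A x
      + ∫ s in Icc (0:ℝ) 1, (1 - (s:ℂ)) * GG f (insert a u) A (update x a s)‖ ^ p := by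
    unfold PP
    exact integral_congr_ae (Filter.Eventually.of_forall fun x => by
      dsimp only
      rw [GG_insert hf hau haA x])
  rw [he]
  refine (Lp_triangle_cube hp hG hC).trans ?_
  refine add_le_add (le_of_eq rfl) ?_
  have h2 := correction_bound hf hp (insert a u) A a
  calc (∫ x in cube d, ‖∫ s in Icc (0:ℝ) 1,
        (1 - (s:ℂ)) * GG f (insert a u) A (update x a s)‖ ^ p) ^ (1/p)
      ≤ ((2:ℝ) ^ (1 - p) * PP f p (insert a u) A) ^ (1/p) :=
        Real.rpow_le_rpow (integral_nonneg fun x => Real.rpow_nonneg (norm_nonneg _) p) h2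
          (by positivity)
    _ = ((2:ℝ) ^ (1 - p)) ^ (1/p) * PP f p (insert a u) A ^ (1/p) :=
        Real.mul_rpow (Real.rpow_nonneg (by norm_num) _) (PP_nonneg f p _ A)

lemma PP_step_rev {f : (Fin d → ℝ) → ℂ} (hf : ContDiff ℝ (⊤ : ℕ∞) f) {p : ℝ} (hp : 1 ≤ p)
    (hau : a ∉ u) (haA : a ∉ A) :
    PP f p u A ^ (1/p) ≤ PP f p u (insert a A) ^ (1/p)
      + ((2:ℝ) ^ (1 - p)) ^ (1/p) * PP f p (insert a u) (insert a A) ^ (1/p) := by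
  have hp0 : 0 < p := lt_of_lt_of_le one_pos hp
  have hGnew : Continuous (GG f u (insert a A)) := continuous_GG hf u _
  have hGv : Continuous (GG f (insert a u) A) := continuous_GG hf _ A
  have hC : Continuous fun x => ∫ s in Icc (0:ℝ) 1,
      (1 - (s:ℂ)) * GG f (insert a u) A (update x a s) :=
    continuous_param_integral isCompact_Icc restrict_compl_Icc
      ((continuous_const.sub (Complex.continuous_ofReal.comp continuous_snd)).mul
        (hGv.comp (continuous_update a)))
  have he : PP f p u A = ∫ x in cube d, ‖GG f u (insert a A) x
      + (- ∫ s in Icc (0:ℝ) 1, (1 - (s:ℂ)) * GG f (insert a u) A (update x a s))‖ ^ p := by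
    unfold PP
    refine integral_congr_ae (Filter.Eventually.of_forall fun x => ?_)
    dsimp only
    rw [GG_insert hf hau haA x, add_neg_cancel_right]
  rw [he]
  refine (Lp_triangle_cube hp hGnew hC.neg).trans ?_
  refine add_le_add (le_of_eq rfl) ?_
  have h2 := correction_bound hf hp (insert a u) A a
  have hnn : ∫ x in cube d, ‖- ∫ s in Icc (0:ℝ) 1,
      (1 - (s:ℂ)) * GG f (insert a u) A (update x a s)‖ ^ p
      = ∫ x in cube d, ‖∫ s in Icc (0:ℝ) 1,
      (1 - (s:ℂ)) * GG f (insert a u) A (update x a s)‖ ^ p := by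
    refine integral_congr_ae (Filter.Eventually.of_forall fun x => ?_)
    dsimp only
    rw [norm_neg]
  rw [PP_insert_of_mem f p (Finset.mem_insert_self a u)]; simp only [Pi.neg_apply]; rw [hnn]
  calc (∫ x in cube d, ‖∫ s in Icc (0:ℝ) 1,
        (1 - (s:ℂ)) * GG f (insert a u) A (update x a s)‖ ^ p) ^ (1/p)
      ≤ ((2:ℝ) ^ (1 - p) * PP f p (insert a u) A) ^ (1/p) :=
        Real.rpow_le_rpow (integral_nonneg fun x => Real.rpow_nonneg (norm_nonneg _) p) h2
          (by positivity)
    _ = ((2:ℝ) ^ (1 - p)) ^ (1/p) * PP f p (insert a u) A ^ (1/p) :=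
        Real.mul_rpow (Real.rpow_nonneg (by norm_num) _) (PP_nonneg f p _ A)

end PolyEquivAux
end Part4

section Part5
open MeasureTheory Set Function

namespace PolyEquivAux

variable {d : ℕ}

lemma prodWeight_pos (γ : ℕ → ℝ) (hγ : ∀ j, 0 < γ j) (u : Finset (Fin d)) :
    (0:ℝ) < prodWeight γ u := by
  unfold prodWeight
  exact Finset.prod_pos fun j _ => hγ _

lemma sum_step {p : ℝ} (hp : 1 ≤ p) (γ : ℕ → ℝ) (hγ : ∀ j, 0 < γ j) (a : Fin d)
    (P Q : Finset (Fin d) → ℝ) (hP : ∀ u, 0 ≤ P u) (hQ : ∀ u, 0 ≤ Q u)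
    (hstep : ∀ u : Finset (Fin d), a ∉ u →
      Q u ^ (1/p) ≤ P u ^ (1/p) + ((2:ℝ)^(1-p))^(1/p) * P (insert a u) ^ (1/p))
    (heq : ∀ u : Finset (Fin d), a ∈ u → Q u = P u) :
    (∑ u : Finset (Fin d), prodWeight γ u ^ (-p) * Q u) ^ (1/p)
      ≤ (1 + ((2:ℝ)^(1-p))^(1/p) * γ (a:ℕ))
        * (∑ u : Finset (Fin d), prodWeight γ u ^ (-p) * P u) ^ (1/p) := by
  have hp0 : 0 < p := lt_of_lt_of_le one_pos hp
  set κ : ℝ := ((2:ℝ)^(1-p))^(1/p) with hκdef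
  have hκ0 : 0 ≤ κ := Real.rpow_nonneg (Real.rpow_nonneg (by norm_num) _) _
  have hwpos : ∀ u : Finset (Fin d), (0:ℝ) < prodWeight γ u ^ (-p) := fun u =>
    Real.rpow_pos_of_pos (prodWeight_pos γ hγ u) _
  have hrpow_inv : ∀ c : ℝ, 0 ≤ c → (c ^ (1/p)) ^ p = c := fun c hc => by
    rw [← Real.rpow_mul hc, one_div_mul_cancel hp0.ne', Real.rpow_one]
  have hrpow_inv' : ∀ c : ℝ, 0 ≤ c → (c ^ p) ^ (1/p) = c := fun c hc => by
    rw [← Real.rpow_mul hc, mul_one_div_cancel hp0.ne', Real.rpow_one]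
  set α : Finset (Fin d) → ℝ :=
    fun u => (prodWeight γ u ^ (-p)) ^ (1/p) * P u ^ (1/p) with hα
  set β : Finset (Fin d) → ℝ := fun u =>
    if a ∈ u then 0 else κ * ((prodWeight γ u ^ (-p)) ^ (1/p) * P (insert a u) ^ (1/p)) with hβ
  have hα0 : ∀ u, 0 ≤ α u := fun u =>
    mul_nonneg (Real.rpow_nonneg (hwpos u).le _) (Real.rpow_nonneg (hP u) _)
  have hβ0 : ∀ u, 0 ≤ β u := by
    intro u
    rw [hβ]
    dsimp only
    by_cases hmem : a ∈ u
    · simp [hmem]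
    · simp only [hmem, if_false]
      exact mul_nonneg hκ0
        (mul_nonneg (Real.rpow_nonneg (hwpos u).le _) (Real.rpow_nonneg (hP _) _))
  have hkey : ∀ u : Finset (Fin d), prodWeight γ u ^ (-p) * Q u ≤ (α u + β u) ^ p := by
    intro u
    rw [hα, hβ]
    dsimp only
    by_cases ha : a ∈ u
    · rw [if_pos ha, add_zero, heq u ha,
        ← Real.mul_rpow (hwpos u).le (hP u), hrpow_inv _ (mul_nonneg (hwpos u).le (hP u))]
    · rw [if_neg ha]
      have h1 : (prodWeight γ u ^ (-p) * Q u) ^ (1/p)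
          ≤ (prodWeight γ u ^ (-p)) ^ (1/p) * P u ^ (1/p)
            + κ * ((prodWeight γ u ^ (-p)) ^ (1/p) * P (insert a u) ^ (1/p)) := by
        rw [Real.mul_rpow (hwpos u).le (hQ u)]
        calc (prodWeight γ u ^ (-p)) ^ (1/p) * Q u ^ (1/p)
            ≤ (prodWeight γ u ^ (-p)) ^ (1/p)
                * (P u ^ (1/p) + κ * P (insert a u) ^ (1/p)) :=
              mul_le_mul_of_nonneg_left (hstep u ha) (Real.rpow_nonneg (hwpos u).le _)
          _ = _ := by ring
      have h2 := Real.rpow_le_rpow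
        (Real.rpow_nonneg (mul_nonneg (hwpos u).le (hQ u)) _) h1 hp0.le
      rwa [hrpow_inv _ (mul_nonneg (hwpos u).le (hQ u))] at h2
  have hsum1 : ∑ u : Finset (Fin d), prodWeight γ u ^ (-p) * Q u
      ≤ ∑ u : Finset (Fin d), (α u + β u) ^ p := Finset.sum_le_sum fun u _ => hkey u
  have hstep2 : (∑ u : Finset (Fin d), prodWeight γ u ^ (-p) * Q u) ^ (1/p)
      ≤ (∑ u : Finset (Fin d), (α u + β u) ^ p) ^ (1/p) :=
    Real.rpow_le_rpow
      (Finset.sum_nonneg fun u _ => mul_nonneg (hwpos u).le (hQ u)) hsum1 (by positivity)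
  have hmink := Real.Lp_add_le_of_nonneg (s := Finset.univ) (f := α) (g := β) hp
    (fun u _ => hα0 u) (fun u _ => hβ0 u)
  have hαp : ∑ u : Finset (Fin d), α u ^ p
      = ∑ u : Finset (Fin d), prodWeight γ u ^ (-p) * P u := by
    refine Finset.sum_congr rfl fun u _ => ?_
    rw [hα]
    dsimp only
    rw [← Real.mul_rpow (hwpos u).le (hP u),
      hrpow_inv _ (mul_nonneg (hwpos u).le (hP u))]
  have hβp : ∑ u : Finset (Fin d), β u ^ p
      ≤ (κ * γ (a:ℕ)) ^ p * ∑ u : Finset (Fin d), prodWeight γ u ^ (-p) * P u := by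
    have he : ∀ u : Finset (Fin d), β u ^ p
        = if a ∈ u then 0 else κ ^ p * (prodWeight γ u ^ (-p) * P (insert a u)) := by
      intro u
      rw [hβ]
      dsimp only
      by_cases hmem : a ∈ u
      · simp only [hmem, if_true]
        exact Real.zero_rpow hp0.ne'
      · simp only [hmem, if_false]
        rw [Real.mul_rpow hκ0 (mul_nonneg (Real.rpow_nonneg (hwpos u).le _)
            (Real.rpow_nonneg (hP _) _)),
          ← Real.mul_rpow (hwpos u).le (hP _),
          hrpow_inv _ (mul_nonneg (hwpos u).le (hP _))]
    have hre : ∑ u ∈ Finset.univ.filter (fun u : Finset (Fin d) => a ∉ u),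
        κ ^ p * (prodWeight γ u ^ (-p) * P (insert a u))
        = (κ ^ p * γ (a:ℕ) ^ p) * ∑ v ∈ Finset.univ.filter (fun v : Finset (Fin d) => a ∈ v),
            prodWeight γ v ^ (-p) * P v := by
      rw [Finset.mul_sum]
      refine Finset.sum_nbij' (i := fun u => insert a u) (j := fun v => v.erase a)
        ?_ ?_ ?_ ?_ ?_
      · intro u hu
        simp only [Finset.mem_filter] at *
        exact ⟨Finset.mem_univ _, Finset.mem_insert_self a u⟩
      · intro v hv
        simp only [Finset.mem_filter] at *
        exact ⟨Finset.mem_univ _, Finset.notMem_erase a v⟩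
      · intro u hu
        simp only [Finset.mem_filter] at hu
        exact Finset.erase_insert hu.2
      · intro v hv
        simp only [Finset.mem_filter] at hv
        exact Finset.insert_erase hv.2
      · intro u hu
        simp only [Finset.mem_filter] at hu
        have hw : prodWeight γ u ^ (-p) = γ (a:ℕ) ^ p * prodWeight γ (insert a u) ^ (-p) := by
          have hpi : prodWeight γ (insert a u) = γ (a:ℕ) * prodWeight γ u := by
            unfold prodWeight
            exact Finset.prod_insert hu.2
          rw [hpi, Real.mul_rpow (hγ (a:ℕ)).le (prodWeight_pos γ hγ u).le,
            ← mul_assoc, ← Real.rpow_add (hγ (a:ℕ)), add_neg_cancel, Real.rpow_zero, one_mul]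
        rw [hw]
        ring
    calc ∑ u : Finset (Fin d), β u ^ p
        = ∑ u ∈ Finset.univ.filter (fun u : Finset (Fin d) => a ∉ u),
            κ ^ p * (prodWeight γ u ^ (-p) * P (insert a u)) := by
          rw [Finset.sum_filter]
          refine Finset.sum_congr rfl fun u _ => ?_
          rw [he u]
          by_cases hmem : a ∈ u <;> simp [hmem]
      _ = (κ ^ p * γ (a:ℕ) ^ p) * ∑ v ∈ Finset.univ.filter (fun v : Finset (Fin d) => a ∈ v),
            prodWeight γ v ^ (-p) * P v := hre
      _ ≤ (κ ^ p * γ (a:ℕ) ^ p) * ∑ u : Finset (Fin d), prodWeight γ u ^ (-p) * P u := by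
          refine mul_le_mul_of_nonneg_left ?_
            (mul_nonneg (Real.rpow_nonneg hκ0 _) (Real.rpow_nonneg (hγ _).le _))
          exact Finset.sum_le_sum_of_subset_of_nonneg (Finset.filter_subset _ _)
            (fun u _ _ => mul_nonneg (hwpos u).le (hP u))
      _ = (κ * γ (a:ℕ)) ^ p * ∑ u : Finset (Fin d), prodWeight γ u ^ (-p) * P u := by
          rw [Real.mul_rpow hκ0 (hγ _).le]
  have hβterm : (∑ u : Finset (Fin d), β u ^ p) ^ (1/p)
      ≤ κ * γ (a:ℕ) * (∑ u : Finset (Fin d), prodWeight γ u ^ (-p) * P u) ^ (1/p) := by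
    refine (Real.rpow_le_rpow (Finset.sum_nonneg fun u _ => Real.rpow_nonneg (hβ0 u) _)
      hβp (by positivity)).trans_eq ?_
    rw [Real.mul_rpow (Real.rpow_nonneg (mul_nonneg hκ0 (hγ _).le) _)
        (Finset.sum_nonneg fun u _ => mul_nonneg (hwpos u).le (hP u)),
      hrpow_inv' _ (mul_nonneg hκ0 (hγ _).le)]
  refine hstep2.trans (hmink.trans ?_)
  rw [hαp]
  refine (add_le_add_right hβterm _).trans_eq ?_
  ring

noncomputable def mixedP (γ : ℕ → ℝ) (f : (Fin d → ℝ) → ℂ) (p : ℝ) (A : Finset (Fin d)) : ℝ :=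
  ∑ u : Finset (Fin d), prodWeight γ u ^ (-p) * PP f p u A

lemma mixedP_nonneg (γ : ℕ → ℝ) (hγ : ∀ j, 0 < γ j) (f : (Fin d → ℝ) → ℂ) (p : ℝ)
    (A : Finset (Fin d)) : 0 ≤ mixedP γ f p A :=
  Finset.sum_nonneg fun u _ => mul_nonneg
    (Real.rpow_pos_of_pos (prodWeight_pos γ hγ u) _).le (PP_nonneg f p u A)

lemma mixedP_step {f : (Fin d → ℝ) → ℂ} (hf : ContDiff ℝ (⊤ : ℕ∞) f) {p : ℝ} (hp : 1 ≤ p)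
    (γ : ℕ → ℝ) (hγ : ∀ j, 0 < γ j) {A : Finset (Fin d)} {a : Fin d} (haA : a ∉ A) :
    mixedP γ f p (insert a A) ^ (1/p)
      ≤ (1 + ((2:ℝ)^(1-p))^(1/p) * γ (a:ℕ)) * mixedP γ f p A ^ (1/p) :=
  sum_step hp γ hγ a (fun u => PP f p u A) (fun u => PP f p u (insert a A))
    (fun u => PP_nonneg f p u A) (fun u => PP_nonneg f p u (insert a A))
    (fun u hau => PP_step hf hp hau haA)
    (fun u hau => PP_insert_of_mem f p hau)

lemma mixedP_step_rev {f : (Fin d → ℝ) → ℂ} (hf : ContDiff ℝ (⊤ : ℕ∞) f) {p : ℝ} (hp : 1 ≤ p)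
    (γ : ℕ → ℝ) (hγ : ∀ j, 0 < γ j) {A : Finset (Fin d)} {a : Fin d} (haA : a ∉ A) :
    mixedP γ f p A ^ (1/p)
      ≤ (1 + ((2:ℝ)^(1-p))^(1/p) * γ (a:ℕ)) * mixedP γ f p (insert a A) ^ (1/p) :=
  sum_step hp γ hγ a (fun u => PP f p u (insert a A)) (fun u => PP f p u A)
    (fun u => PP_nonneg f p u (insert a A)) (fun u => PP_nonneg f p u A)
    (fun u hau => PP_step_rev hf hp hau haA)
    (fun u hau => (PP_insert_of_mem f p hau).symm)

lemma mixedP_chain {f : (Fin d → ℝ) → ℂ} (hf : ContDiff ℝ (⊤ : ℕ∞) f) {p : ℝ} (hp : 1 ≤ p)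
    (γ : ℕ → ℝ) (hγ : ∀ j, 0 < γ j) (A : Finset (Fin d)) :
    mixedP γ f p A ^ (1/p)
        ≤ (∏ j ∈ A, (1 + ((2:ℝ)^(1-p))^(1/p) * γ (j:ℕ))) * mixedP γ f p ∅ ^ (1/p)
      ∧ mixedP γ f p ∅ ^ (1/p)
        ≤ (∏ j ∈ A, (1 + ((2:ℝ)^(1-p))^(1/p) * γ (j:ℕ))) * mixedP γ f p A ^ (1/p) := by
  have hκ0 : (0:ℝ) ≤ ((2:ℝ)^(1-p))^(1/p) :=
    Real.rpow_nonneg (Real.rpow_nonneg (by norm_num) _) _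
  have hfac : ∀ j : Fin d, (0:ℝ) ≤ 1 + ((2:ℝ)^(1-p))^(1/p) * γ (j:ℕ) := fun j => by
    have := mul_nonneg hκ0 (hγ (j:ℕ)).le
    linarith
  induction A using Finset.induction_on with
  | empty => simp
  | insert _ _ ha ih =>
    rename_i a A
    obtain ⟨ih1, ih2⟩ := ih
    rw [Finset.prod_insert ha]
    constructor
    · calc mixedP γ f p (insert a A) ^ (1/p)
          ≤ (1 + ((2:ℝ)^(1-p))^(1/p) * γ (a:ℕ)) * mixedP γ f p A ^ (1/p) :=
            mixedP_step hf hp γ hγ ha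
        _ ≤ (1 + ((2:ℝ)^(1-p))^(1/p) * γ (a:ℕ))
            * ((∏ j ∈ A, (1 + ((2:ℝ)^(1-p))^(1/p) * γ (j:ℕ))) * mixedP γ f p ∅ ^ (1/p)) :=
            mul_le_mul_of_nonneg_left ih1 (hfac a)
        _ = (1 + ((2:ℝ)^(1-p))^(1/p) * γ (a:ℕ))
            * (∏ j ∈ A, (1 + ((2:ℝ)^(1-p))^(1/p) * γ (j:ℕ))) * mixedP γ f p ∅ ^ (1/p) := by
            ring
    · calc mixedP γ f p ∅ ^ (1/p)
          ≤ (∏ j ∈ A, (1 + ((2:ℝ)^(1-p))^(1/p) * γ (j:ℕ))) * mixedP γ f p A ^ (1/p) := ih2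
        _ ≤ (∏ j ∈ A, (1 + ((2:ℝ)^(1-p))^(1/p) * γ (j:ℕ)))
            * ((1 + ((2:ℝ)^(1-p))^(1/p) * γ (a:ℕ)) * mixedP γ f p (insert a A) ^ (1/p)) :=
            mul_le_mul_of_nonneg_left (mixedP_step_rev hf hp γ hγ ha)
              (Finset.prod_nonneg fun j _ => hfac j)
        _ = (1 + ((2:ℝ)^(1-p))^(1/p) * γ (a:ℕ))
            * (∏ j ∈ A, (1 + ((2:ℝ)^(1-p))^(1/p) * γ (j:ℕ)))
            * mixedP γ f p (insert a A) ^ (1/p) := by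
            ring

lemma mixedP_empty (γ : ℕ → ℝ) (f : (Fin d → ℝ) → ℂ) (p : ℝ) :
    mixedP γ f p (∅ : Finset (Fin d)) = anchP (prodWeight γ) p f := by
  unfold mixedP anchP
  refine Finset.sum_congr rfl fun u _ => ?_
  congr 1
  unfold PP
  refine integral_congr_ae (Filter.Eventually.of_forall fun x => ?_)
  dsimp only
  congr 2
  rw [GG_def]
  have hpt : ∀ t : Fin d → ℝ, pt u (∅ : Finset (Fin d)) x t = combine u x 0 := fun t =>
    funext fun j => by simp [pt, combine]
  rw [integral_congr_ae (Filter.Eventually.of_forall fun t => by rw [hpt t])]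
  rw [integral_const]
  simp

lemma mixedP_univ (γ : ℕ → ℝ) (f : (Fin d → ℝ) → ℂ) (p : ℝ) :
    mixedP γ f p (Finset.univ : Finset (Fin d)) = anovaP (prodWeight γ) p f := by
  unfold mixedP anovaP
  refine Finset.sum_congr rfl fun u _ => ?_
  congr 1
  unfold PP
  refine integral_congr_ae (Filter.Eventually.of_forall fun x => ?_)
  dsimp only
  congr 2
  rw [GG_def]
  refine integral_congr_ae (Filter.Eventually.of_forall fun t => ?_)
  dsimp only
  have hpt : pt u (Finset.univ : Finset (Fin d)) x t = combine u x t :=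
    funext fun j => by simp [pt, combine]
  rw [hpt]

lemma anchP_nonneg (γ : ℕ → ℝ) (hγ : ∀ j, 0 < γ j) (f : (Fin d → ℝ) → ℂ) (p : ℝ) :
    0 ≤ anchP (prodWeight γ) p f := by
  rw [← mixedP_empty]
  exact mixedP_nonneg γ hγ f p ∅

lemma anovaP_nonneg (γ : ℕ → ℝ) (hγ : ∀ j, 0 < γ j) (f : (Fin d → ℝ) → ℂ) (p : ℝ) :
    0 ≤ anovaP (prodWeight γ) p f := by
  rw [← mixedP_univ]
  exact mixedP_nonneg γ hγ f p Finset.univ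

end PolyEquivAux
end Part5

/-- if `τ₀ = sup_d (∑_{j=1}^d γ_j)/ln(d+1)` is finite then for every
`τ > (τ₀/2)(1+1/p)` the anchored and ANOVA norms for the product weights are equivalent
up to a factor `c·d^τ`. -/
theorem polynomial_equivalence_of_log_bound (p : ℝ) (hp : 1 ≤ p) (γ : ℕ → ℝ)
    (hγ : ∀ j, 0 < γ j)
    (hbdd : BddAbove (Set.range fun d : ℕ =>
      (∑ j ∈ Finset.range d, γ j) / Real.log (d + 1)))
    (τ : ℝ)
    (hτ : ((⨆ d : ℕ, (∑ j ∈ Finset.range d, γ j) / Real.log (d + 1)) / 2) * (1 + 1 / p) < τ) :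
    ∃ c : ℝ, 0 < c ∧ ∀ d : ℕ, 1 ≤ d → ∀ f : (Fin d → ℝ) → ℂ, ContDiff ℝ (⊤ : ℕ∞) f →
      anovaNorm (prodWeight γ) p f ≤ c * (d : ℝ) ^ τ * anchNorm (prodWeight γ) p f ∧
      anchNorm (prodWeight γ) p f ≤ c * (d : ℝ) ^ τ * anovaNorm (prodWeight γ) p f := by
  classical
  have hp0 : 0 < p := lt_of_lt_of_le one_pos hp
  set τ₀ : ℝ := ⨆ d : ℕ, (∑ j ∈ Finset.range d, γ j) / Real.log (d + 1) with hτ₀def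
  set κ : ℝ := ((2:ℝ) ^ (1 - p)) ^ (1/p) with hκdef
  have hκ0 : 0 ≤ κ := Real.rpow_nonneg (Real.rpow_nonneg (by norm_num) _) _
  have hτ₀0 : 0 ≤ τ₀ := by
    have h0 := le_ciSup hbdd 0
    simpa using h0
  -- κ ≤ (1 + 1/p)/2
  have h2a : (2:ℝ) ^ (1/p : ℝ) ≤ 1 + 1/p := by
    have ha0 : (0:ℝ) ≤ 1/p := by positivity
    have ha1 : (1:ℝ)/p ≤ 1 := by
      rw [div_le_one hp0]
      exact hp
    have hcx := convexOn_exp.2 (Set.mem_univ (0:ℝ)) (Set.mem_univ (Real.log 2))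
      (by linarith : (0:ℝ) ≤ 1 - 1/p) ha0 (by ring)
    simp only [smul_eq_mul, mul_zero, zero_add, Real.exp_zero, mul_one,
      Real.exp_log two_pos] at hcx
    rw [Real.rpow_def_of_pos two_pos]
    calc Real.exp (Real.log 2 * (1/p)) = Real.exp ((1/p) * Real.log 2) := by rw [mul_comm]
      _ ≤ (1 - 1/p) * 1 + (1/p) * 2 := by simpa using hcx
      _ = 1 + 1/p := by ring
  have hκle : κ ≤ (1 + 1/p)/2 := by
    have hκeq : κ = (2:ℝ) ^ ((1-p) * (1/p)) := by
      rw [hκdef, ← Real.rpow_mul (by norm_num)]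
    have hexp : (1-p) * (1/p) = 1/p - 1 := by field_simp
    rw [hκeq, hexp, Real.rpow_sub two_pos, Real.rpow_one]
    linarith
  have hκττ : κ * τ₀ < τ := by
    have h1 : κ * τ₀ ≤ ((1 + 1/p)/2) * τ₀ := mul_le_mul_of_nonneg_right hκle hτ₀0
    have h2 : ((1 + 1/p)/2) * τ₀ = τ₀ / 2 * (1 + 1/p) := by ring
    rw [h2] at h1
    exact lt_of_le_of_lt h1 hτ
  refine ⟨(2:ℝ) ^ (κ * τ₀), Real.rpow_pos_of_pos two_pos _, ?_⟩
  intro d hd f hf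
  have hd1 : (1:ℝ) ≤ (d:ℝ) := by exact_mod_cast hd
  -- bound on the product of factors
  have hprod : (∏ j : Fin d, (1 + κ * γ (j:ℕ)))
      ≤ (2:ℝ) ^ (κ * τ₀) * (d:ℝ) ^ τ := by
    have hlog0 : (0:ℝ) < Real.log ((d:ℝ)+1) := Real.log_pos (by linarith)
    have hsum : (∑ j ∈ Finset.range d, γ j) ≤ τ₀ * Real.log ((d:ℝ)+1) := by
      have hle := le_ciSup hbdd d
      have h2 := mul_le_mul_of_nonneg_right hle hlog0.le
      rwa [div_mul_cancel₀ _ hlog0.ne'] at h2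
    calc (∏ j : Fin d, (1 + κ * γ (j:ℕ)))
        ≤ ∏ j : Fin d, Real.exp (κ * γ (j:ℕ)) := by
          refine Finset.prod_le_prod (fun j _ => ?_) (fun j _ => ?_)
          · have := mul_nonneg hκ0 (hγ (j:ℕ)).le
            linarith
          · linarith [Real.add_one_le_exp (κ * γ (j:ℕ))]
      _ = Real.exp (∑ j : Fin d, κ * γ (j:ℕ)) := (Real.exp_sum _ _).symm
      _ = Real.exp (κ * ∑ j ∈ Finset.range d, γ j) := by
          rw [← Finset.mul_sum, Fin.sum_univ_eq_sum_range (fun j => γ j) d]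
      _ ≤ Real.exp (κ * (τ₀ * Real.log ((d:ℝ)+1))) :=
          Real.exp_le_exp.mpr (mul_le_mul_of_nonneg_left hsum hκ0)
      _ = ((d:ℝ)+1) ^ (κ * τ₀) := by
          rw [Real.rpow_def_of_pos (by linarith : (0:ℝ) < (d:ℝ)+1)]
          congr 1
          ring
      _ ≤ ((2:ℝ) * (d:ℝ)) ^ (κ * τ₀) :=
          Real.rpow_le_rpow (by linarith) (by linarith) (mul_nonneg hκ0 hτ₀0)
      _ = (2:ℝ) ^ (κ * τ₀) * (d:ℝ) ^ (κ * τ₀) :=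
          Real.mul_rpow (by norm_num) (by linarith)
      _ ≤ (2:ℝ) ^ (κ * τ₀) * (d:ℝ) ^ τ := by
          refine mul_le_mul_of_nonneg_left
            (Real.rpow_le_rpow_of_exponent_le hd1 hκττ.le) ?_
          exact (Real.rpow_pos_of_pos two_pos _).le
  obtain ⟨hfor, hrev⟩ := PolyEquivAux.mixedP_chain hf hp γ hγ (Finset.univ : Finset (Fin d))
  rw [PolyEquivAux.mixedP_univ, PolyEquivAux.mixedP_empty] at hfor hrev
  have hanch0 : 0 ≤ anchP (prodWeight γ) p f ^ (1/p) :=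
    Real.rpow_nonneg (PolyEquivAux.anchP_nonneg γ hγ f p) _
  have hanova0 : 0 ≤ anovaP (prodWeight γ) p f ^ (1/p) :=
    Real.rpow_nonneg (PolyEquivAux.anovaP_nonneg γ hγ f p) _
  constructor
  · show anovaP (prodWeight γ) p f ^ (1/p)
      ≤ (2:ℝ) ^ (κ * τ₀) * (d:ℝ) ^ τ * anchP (prodWeight γ) p f ^ (1/p)
    refine hfor.trans ?_
    exact mul_le_mul_of_nonneg_right hprod hanch0
  · show anchP (prodWeight γ) p f ^ (1/p)
      ≤ (2:ℝ) ^ (κ * τ₀) * (d:ℝ) ^ τ * anovaP (prodWeight γ) p f ^ (1/p)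
    refine hrev.trans ?_
    exact mul_le_mul_of_nonneg_right hprod hanova0
end
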